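/- arXiv:2407.00957 — 6 statements merged into one kernel-verified Lean document; each statement's English description precedes it below -/
import Mathlib

section
/- The ReLU is a γ-parameter bounding activation for every γ > 0: for every γ > 0, every natural numbers d, l ≥ 1, every compact set U ⊆ ℝ^d, every continuous function h : ℝ^d → ℝ^l, and every ε > 0, there exist n ∈ ℕ and parameters A ∈ ℝ^{l×n}, B ∈ ℝ^{n×d}, b ∈ ℝ^n with every individual entry of A, B, and b lying in the interval [−γ, γ], such that ∫_U ‖h(x) − A·ReLU(Bx + b)‖ dx ≤ ε, where the integral is with respect to Lebesgue measure on ℝ^d. -/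
open MeasureTheory

/-- The ReLU activation function. -/
noncomputable def relu (t : ℝ) : ℝ := max t 0

/-!
The functions `x ↦ exp (w ⬝ᵥ x)` form a monoid under multiplication, so their span is a
point-separating subalgebra of `C(U, ℝ)` and is dense by Stone–Weierstrass. Each of them is a
continuous function of the single variable `w ⬝ᵥ x`, and on an interval a continuous function of
one variable is uniformly close to its piecewise linear interpolant, which is a finite combination
of ReLUs. Hence one-hidden-layer ReLU networks are uniformly dense on compact sets, and a uniform
error `δ` in each of the `l` outputs costs at most `l δ vol(U)` in the integral.

Because the ReLU is positively homogeneous, dividing the incoming weights and bias of a neuron by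
`c > 0` and multiplying its outgoing weights by `c` does not change the network, and neither does
replacing each neuron by `K` copies with outgoing weights divided by `K`. Choosing `c`, then `K`,
large brings every parameter into `[-γ, γ]`.
-/

open Matrix

@[fun_prop]
theorem continuous_relu : Continuous relu := continuous_id.max continuous_const

theorem relu_of_nonneg {t : ℝ} (ht : 0 ≤ t) : relu t = t := max_eq_left ht

theorem relu_of_nonpos {t : ℝ} (ht : t ≤ 0) : relu t = 0 := max_eq_right ht

theorem relu_mul_of_nonneg {c : ℝ} (hc : 0 ≤ c) (t : ℝ) : relu (c * t) = c * relu t := by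
  simp [relu, mul_max_of_nonneg _ _ hc]

section Interpolation

/-- The piecewise linear interpolant of `g` at the nodes `τ 0 ≤ ⋯ ≤ τ m`. -/
noncomputable def reluInterp (g : ℝ → ℝ) (τ : ℕ → ℝ) (m : ℕ) (t : ℝ) : ℝ :=
  g (τ 0) + ∑ i ∈ Finset.range m,
    slope g (τ i) (τ (i + 1)) * (relu (t - τ i) - relu (t - τ (i + 1)))

variable {g : ℝ → ℝ} {τ : ℕ → ℝ}

theorem reluInterp_eq (hτ : Monotone τ) {j m : ℕ} (hjm : j < m) {t : ℝ}
    (ht : t ∈ Set.Icc (τ j) (τ (j + 1))) :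
    reluInterp g τ m t = g (τ j) + slope g (τ j) (τ (j + 1)) * (t - τ j) := by
  induction m, hjm using Nat.le_induction with
  | base =>
    have hbelow : ∀ i ∈ Finset.range j, slope g (τ i) (τ (i + 1)) *
        (relu (t - τ i) - relu (t - τ (i + 1))) = g (τ (i + 1)) - g (τ i) := by
      intro i hi
      have hi : τ (i + 1) ≤ t := (hτ (Finset.mem_range.mp hi)).trans ht.1
      rw [relu_of_nonneg (by linarith [hτ i.le_succ]), relu_of_nonneg (by linarith),
        show t - τ i - (t - τ (i + 1)) = τ (i + 1) - τ i by ring, mul_comm]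
      exact sub_smul_slope g _ _
    rw [reluInterp, Finset.sum_range_succ, Finset.sum_congr rfl hbelow,
      Finset.sum_range_sub (fun i => g (τ i)), relu_of_nonneg (sub_nonneg.2 ht.1),
      relu_of_nonpos (sub_nonpos.2 ht.2)]
    ring
  | succ m hjm ih =>
    have hm : t ≤ τ m := ht.2.trans (hτ hjm)
    rw [reluInterp, Finset.sum_range_succ, relu_of_nonpos (sub_nonpos.2 hm),
      relu_of_nonpos (sub_nonpos.2 (hm.trans (hτ m.le_succ))), ← ih, reluInterp]
    ring

theorem exists_mem_Icc_succ_of_mem_Icc {m : ℕ} (hm : 0 < m) {t : ℝ}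
    (ht : t ∈ Set.Icc (τ 0) (τ m)) : ∃ j < m, t ∈ Set.Icc (τ j) (τ (j + 1)) := by
  induction m, hm using Nat.le_induction with
  | base => exact ⟨0, one_pos, ht⟩
  | succ m _ ih =>
    by_cases htm : t ≤ τ m
    · obtain ⟨j, hj, htj⟩ := ih ⟨ht.1, htm⟩
      exact ⟨j, by omega, htj⟩
    · exact ⟨m, by omega, le_of_not_ge htm, ht.2⟩

theorem abs_sub_reluInterp_le (hτ : Monotone τ) {m : ℕ} (hm : 0 < m) {ε : ℝ}
    (hosc : ∀ i < m, ∀ s ∈ Set.Icc (τ i) (τ (i + 1)), ∀ s' ∈ Set.Icc (τ i) (τ (i + 1)),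
      |g s - g s'| ≤ ε)
    {t : ℝ} (ht : t ∈ Set.Icc (τ 0) (τ m)) : |g t - reluInterp g τ m t| ≤ ε := by
  obtain ⟨j, hj, htj⟩ := exists_mem_Icc_succ_of_mem_Icc hm ht
  have hcell : τ j ≤ τ (j + 1) := htj.1.trans htj.2
  set θ := (t - τ j) / (τ (j + 1) - τ j)
  have hθ0 : 0 ≤ θ := div_nonneg (sub_nonneg.2 htj.1) (sub_nonneg.2 hcell)
  have hθ1 : θ ≤ 1 := div_le_one_of_le₀ (by linarith [htj.2]) (sub_nonneg.2 hcell)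
  have hconvex : g t - reluInterp g τ m t =
      (1 - θ) * (g t - g (τ j)) + θ * (g t - g (τ (j + 1))) := by
    rw [reluInterp_eq hτ hj htj, slope_def_field]
    ring
  have hleft := hosc j hj t htj (τ j) ⟨le_rfl, hcell⟩
  have hright := hosc j hj t htj (τ (j + 1)) ⟨hcell, le_rfl⟩
  calc |g t - reluInterp g τ m t|
      ≤ (1 - θ) * |g t - g (τ j)| + θ * |g t - g (τ (j + 1))| := by
        rw [hconvex]
        refine (abs_add_le _ _).trans_eq ?_
        rw [abs_mul, abs_mul, abs_of_nonneg (sub_nonneg.2 hθ1), abs_of_nonneg hθ0]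
    _ ≤ (1 - θ) * ε + θ * ε := by gcongr
    _ = ε := by ring

theorem exists_reluInterp_approx {a b : ℝ} (hab : a ≤ b) (hg : ContinuousOn g (Set.Icc a b))
    {ε : ℝ} (hε : 0 < ε) :
    ∃ (τ : ℕ → ℝ) (m : ℕ), ∀ t ∈ Set.Icc a b, |g t - reluInterp g τ m t| ≤ ε := by
  obtain ⟨δ, hδ, hgδ⟩ := Metric.uniformContinuousOn_iff_le.mp
    (isCompact_Icc.uniformContinuousOn_of_continuous hg) ε hε
  obtain ⟨m, hm⟩ := exists_nat_gt ((b - a) / δ)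
  have hm0 : (0 : ℝ) < m := (div_nonneg (sub_nonneg.2 hab) hδ.le).trans_lt hm
  set Δ := (b - a) / m
  have hΔδ : Δ ≤ δ := by
    rw [div_lt_iff₀ hδ] at hm
    rw [div_le_iff₀ hm0]
    linarith
  set τ : ℕ → ℝ := fun i => a + i * Δ
  have hτ : Monotone τ := fun i j hij => by simp only [τ]; gcongr
  have hτ0 : τ 0 = a := by simp [τ]
  have hτm : τ m = b := by simp only [τ, Δ]; field_simp; ring
  refine ⟨τ, m, fun t ht => abs_sub_reluInterp_le hτ (by exact_mod_cast hm0) ?_ (by rwa [hτ0, hτm])⟩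
  intro i hi s hs s' hs'
  have hsub : Set.Icc (τ i) (τ (i + 1)) ⊆ Set.Icc a b :=
    Set.Icc_subset_Icc (hτ0 ▸ hτ i.zero_le) (hτm ▸ hτ hi)
  have hwidth : τ (i + 1) - τ i = Δ := by simp only [τ]; push_cast; ring
  refine hgδ s (hsub hs) s' (hsub hs') ?_
  rw [Real.dist_eq, abs_le]
  constructor <;> linarith [hs.1, hs.2, hs'.1, hs'.2]

end Interpolation

section ReluSpan

variable {ι : Type*} [Fintype ι]

noncomputable def reluNeuron (w : ι → ℝ) (b : ℝ) : C(ι → ℝ, ℝ) :=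
  ⟨fun x => relu (w ⬝ᵥ x + b), by fun_prop⟩

variable (ι) in
noncomputable def reluSpan : Submodule ℝ C(ι → ℝ, ℝ) :=
  Submodule.span ℝ (Set.range fun p : (ι → ℝ) × ℝ => reluNeuron p.1 p.2)

theorem reluNeuron_mem_reluSpan (w : ι → ℝ) (b : ℝ) : reluNeuron w b ∈ reluSpan ι :=
  Submodule.subset_span ⟨(w, b), rfl⟩

theorem exists_mem_reluSpan_eq_reluInterp_comp (g : ℝ → ℝ) (τ : ℕ → ℝ) (m : ℕ) (w : ι → ℝ) :
    ∃ f ∈ reluSpan ι, ∀ x, f x = reluInterp g τ m (w ⬝ᵥ x) := by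
  refine ⟨g (τ 0) • reluNeuron 0 1 + ∑ i ∈ Finset.range m, slope g (τ i) (τ (i + 1)) •
    (reluNeuron w (-τ i) - reluNeuron w (-τ (i + 1))), ?_, fun x => ?_⟩
  · refine add_mem (Submodule.smul_mem _ _ (reluNeuron_mem_reluSpan _ _)) ?_
    exact Submodule.sum_mem _ fun i _ => Submodule.smul_mem _ _
      (sub_mem (reluNeuron_mem_reluSpan _ _) (reluNeuron_mem_reluSpan _ _))
  · simp [reluNeuron, reluInterp, relu_of_nonneg, sub_eq_add_neg, mul_add]

theorem exists_mem_reluSpan_approx_comp_dotProduct {U : Set (ι → ℝ)} (hU : IsCompact U)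
    {g : ℝ → ℝ} (hg : Continuous g) (w : ι → ℝ) {ε : ℝ} (hε : 0 < ε) :
    ∃ f ∈ reluSpan ι, ∀ x ∈ U, |g (w ⬝ᵥ x) - f x| ≤ ε := by
  obtain ⟨M, hM⟩ := hU.exists_bound_of_continuousOn (f := fun x => w ⬝ᵥ x) (by fun_prop)
  obtain ⟨τ, m, hτm⟩ := exists_reluInterp_approx (neg_le_self (abs_nonneg M)) hg.continuousOn hε
  obtain ⟨f, hf, hfx⟩ := exists_mem_reluSpan_eq_reluInterp_comp g τ m w
  refine ⟨f, hf, fun x hx => ?_⟩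
  rw [hfx]
  exact hτm _ (abs_le.mp ((hM x hx).trans (le_abs_self M)))

end ReluSpan

theorem toSubmodule_adjoin_range_monoidHom {R A M : Type*} [CommSemiring R] [Semiring A]
    [Algebra R A] [Monoid M] (f : M →* A) :
    Subalgebra.toSubmodule (Algebra.adjoin R (Set.range f)) = Submodule.span R (Set.range f) := by
  rw [Algebra.adjoin_eq_span, ← MonoidHom.coe_mrange, Submonoid.closure_eq]

section Exponentials

variable {ι : Type*} [Fintype ι] (U : Set (ι → ℝ))

/-- `x ↦ exp (w ⬝ᵥ x)` on `U`, encoded as a monoid hom in `w` so that its range is closed under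
products. -/
noncomputable def expDotProduct : Multiplicative (ι → ℝ) →* C(U, ℝ) where
  toFun w := ⟨fun x => Real.exp (w.toAdd ⬝ᵥ x), by fun_prop⟩
  map_one' := by ext; simp
  map_mul' v w := by ext; simp [add_dotProduct, Real.exp_add]

theorem separatesPoints_adjoin_range_expDotProduct :
    (Algebra.adjoin ℝ (Set.range (expDotProduct U))).SeparatesPoints := by
  classical
  intro x y hxy
  obtain ⟨q, hq⟩ := Function.ne_iff.mp (Subtype.coe_ne_coe.mpr hxy)
  refine ⟨_, ⟨_, Algebra.subset_adjoin ⟨Multiplicative.ofAdd (Pi.single q 1), rfl⟩, rfl⟩, ?_⟩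
  simpa [expDotProduct, single_dotProduct] using hq

end Exponentials

section Density

variable {X : Type*} [TopologicalSpace X]

def restrictLinearMap (U : Set X) : C(X, ℝ) →ₗ[ℝ] C(U, ℝ) where
  toFun f := f.restrict U
  map_add' _ _ := rfl
  map_smul' _ _ := rfl

theorem restrict_mem_topologicalClosure_map_iff {U : Set X} [CompactSpace U]
    {N : Submodule ℝ C(X, ℝ)} {f : C(X, ℝ)} :
    f.restrict U ∈ (N.map (restrictLinearMap U)).topologicalClosure ↔
      ∀ ε > 0, ∃ g ∈ N, ∀ x ∈ U, |f x - g x| ≤ ε := by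
  rw [← SetLike.mem_coe, Submodule.topologicalClosure_coe, Metric.mem_closure_iff]
  constructor
  · intro h ε hε
    obtain ⟨_, ⟨g, hg, rfl⟩, hfg⟩ := h ε hε
    exact ⟨g, hg, fun x hx => (ContinuousMap.dist_apply_le_dist ⟨x, hx⟩).trans hfg.le⟩
  · intro h ε hε
    obtain ⟨g, hg, hfg⟩ := h (ε / 2) (half_pos hε)
    refine ⟨_, ⟨g, hg, rfl⟩, ?_⟩
    calc dist (f.restrict U) (g.restrict U) ≤ ε / 2 :=
          (ContinuousMap.dist_le (half_pos hε).le).mpr fun x => hfg x x.2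
      _ < ε := half_lt_self hε

theorem exists_mem_reluSpan_approx {ι : Type*} [Fintype ι] {U : Set (ι → ℝ)} (hU : IsCompact U)
    (f : C(ι → ℝ, ℝ)) {ε : ℝ} (hε : 0 < ε) : ∃ g ∈ reluSpan ι, ∀ x ∈ U, |f x - g x| ≤ ε := by
  have : CompactSpace U := isCompact_iff_compactSpace.mp hU
  set N := (reluSpan ι).map (restrictLinearMap U)
  have hexp : Set.range (expDotProduct U) ⊆ N.topologicalClosure := by
    rintro _ ⟨w, rfl⟩
    exact restrict_mem_topologicalClosure_map_iff (f := ⟨fun x => Real.exp (w.toAdd ⬝ᵥ x),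
      by fun_prop⟩).mpr fun ε hε =>
        exists_mem_reluSpan_approx_comp_dotProduct hU Real.continuous_exp w.toAdd hε
  have hadjoin : Subalgebra.toSubmodule (Algebra.adjoin ℝ (Set.range (expDotProduct U))) ≤
      N.topologicalClosure := by
    rw [toSubmodule_adjoin_range_monoidHom]
    exact Submodule.span_le.mpr hexp
  have hdense : N.topologicalClosure = ⊤ := by
    refine eq_top_iff.mpr fun F _ =>
      closure_minimal (fun G hG => hadjoin hG) N.isClosed_topologicalClosure ?_
    rw [Subalgebra.coe_toSubmodule, ← Subalgebra.topologicalClosure_coe,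
      ContinuousMap.subalgebra_topologicalClosure_eq_top_of_separatesPoints _
        (separatesPoints_adjoin_range_expDotProduct U)]
    trivial
  exact restrict_mem_topologicalClosure_map_iff.mp (hdense ▸ Submodule.mem_top) ε hε

end Density

section Network

variable {ι κ m : Type*} [Fintype ι] [Fintype κ]

noncomputable def reluNet (A : Matrix m κ ℝ) (B : Matrix κ ι ℝ) (b : κ → ℝ) (x : ι → ℝ) : m → ℝ :=
  A *ᵥ fun i => relu ((B *ᵥ x) i + b i)

theorem reluNet_reindex {κ' : Type*} [Fintype κ'] (e : κ ≃ κ') (A : Matrix m κ ℝ)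
    (B : Matrix κ ι ℝ) (b : κ → ℝ) :
    reluNet (A.submatrix id e.symm) (B.submatrix e.symm id) (b ∘ e.symm) = reluNet A B b := by
  ext x p
  simp only [reluNet, mulVec, dotProduct, submatrix_apply, Function.comp_apply, id]
  exact e.symm.sum_comp fun i => A p i * relu ((∑ q, B i q * x q) + b i)

theorem reluNet_smul (A : Matrix m κ ℝ) (B : Matrix κ ι ℝ) (b : κ → ℝ) {c : ℝ} (hc : 0 < c) :
    reluNet (c • A) (c⁻¹ • B) (c⁻¹ • b) = reluNet A B b := by
  funext x
  have hrelu : (fun i => relu (((c⁻¹ • B) *ᵥ x) i + (c⁻¹ • b) i)) =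
      c⁻¹ • fun i => relu ((B *ᵥ x) i + b i) := by
    ext i
    simp [smul_mulVec, ← mul_add, relu_mul_of_nonneg (inv_nonneg.2 hc.le)]
  rw [reluNet, reluNet, hrelu, smul_mulVec, mulVec_smul, smul_smul, mul_inv_cancel₀ hc.ne',
    one_smul]

theorem reluNet_replicate (A : Matrix m κ ℝ) (B : Matrix κ ι ℝ) (b : κ → ℝ) {K : ℕ} (hK : K ≠ 0) :
    reluNet ((K : ℝ)⁻¹ • A.submatrix id (Prod.fst : κ × Fin K → κ)) (B.submatrix Prod.fst id)
      (b ∘ Prod.fst) = reluNet A B b := by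
  ext x p
  simp only [reluNet, mulVec, dotProduct, Fintype.sum_prod_type]
  simp [← mul_assoc, mul_inv_cancel₀ (Nat.cast_ne_zero.2 hK : (K : ℝ) ≠ 0)]

theorem exists_reluNet_eq_of_mem_reluSpan [Fintype m] {f : m → C(ι → ℝ, ℝ)}
    (hf : ∀ p, f p ∈ reluSpan ι) :
    ∃ (S : Finset ((ι → ℝ) × ℝ)) (A : Matrix m S ℝ),
      ∀ x p, reluNet A (Matrix.of fun s : S => s.1.1) (fun s => s.1.2) x p = f p x := by
  classical
  choose c hc using fun p => Finsupp.mem_span_range_iff_exists_finsupp.mp (hf p)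
  refine ⟨Finset.univ.biUnion fun p => (c p).support, Matrix.of fun p s => c p s, fun x p => ?_⟩
  have hsupp : (c p).support ⊆ Finset.univ.biUnion fun p => (c p).support :=
    Finset.subset_biUnion_of_mem (fun p => (c p).support) (Finset.mem_univ p)
  rw [← hc p, Finsupp.sum_of_support_subset _ hsupp
    (fun (s : (ι → ℝ) × ℝ) (a : ℝ) => a • reluNeuron s.1 s.2) fun _ _ => zero_smul ℝ _]
  simp [reluNet, reluNeuron, mulVec, dotProduct, Finset.sum_attach _
    fun s => c p s * relu (∑ i, s.1 i * x i + s.2)]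

section

attribute [local instance] Matrix.normedAddCommGroup

theorem exists_reluNet_eq_params_abs_le [Fintype m] (A : Matrix m κ ℝ) (B : Matrix κ ι ℝ) (b : κ → ℝ)
    {γ : ℝ} (hγ : 0 < γ) :
    ∃ (n : ℕ) (A' : Matrix m (Fin n) ℝ) (B' : Matrix (Fin n) ι ℝ) (b' : Fin n → ℝ),
      (∀ p i, |A' p i| ≤ γ) ∧ (∀ i q, |B' i q| ≤ γ) ∧ (∀ i, |b' i| ≤ γ) ∧
      reluNet A' B' b' = reluNet A B b := by
  set c := (‖B‖ + ‖b‖) / γ + 1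
  have hc : 0 < c := by positivity
  have hcγ : ‖B‖ + ‖b‖ ≤ c * γ := by
    simp only [c, add_mul, div_mul_cancel₀ _ hγ.ne']
    linarith
  set K := ⌈‖c • A‖ / γ⌉₊ + 1
  have hKγ : ‖c • A‖ ≤ K * γ := by
    rw [← div_le_iff₀ hγ]
    exact (Nat.le_ceil _).trans (by simp [K])
  let e := Fintype.equivFin (κ × Fin K)
  refine ⟨_, ((K : ℝ)⁻¹ • (c • A).submatrix id Prod.fst).submatrix id e.symm,
    ((c⁻¹ • B).submatrix Prod.fst id).submatrix e.symm id, ((c⁻¹ • b) ∘ Prod.fst) ∘ e.symm,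
    fun p i => ?_, fun i q => ?_, fun i => ?_, ?_⟩
  · simp only [submatrix_apply, id, Matrix.smul_apply, smul_eq_mul]
    rw [abs_mul, abs_inv, Nat.abs_cast, inv_mul_le_iff₀ (by positivity), ← smul_eq_mul,
      ← Matrix.smul_apply, ← Real.norm_eq_abs]
    exact (norm_entry_le_entrywise_sup_norm _).trans hKγ
  · simp only [submatrix_apply, id, Matrix.smul_apply, smul_eq_mul]
    rw [abs_mul, abs_inv, abs_of_pos hc, inv_mul_le_iff₀ hc, ← Real.norm_eq_abs]
    linarith [norm_entry_le_entrywise_sup_norm B (i := (e.symm i).1) (j := q), norm_nonneg b]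
  · simp only [Function.comp_apply, Pi.smul_apply, smul_eq_mul]
    rw [abs_mul, abs_inv, abs_of_pos hc, inv_mul_le_iff₀ hc, ← Real.norm_eq_abs]
    linarith [norm_le_pi_norm b (e.symm i).1, norm_nonneg B]
  · rw [reluNet_reindex, reluNet_replicate _ _ _ (Nat.succ_ne_zero _), reluNet_smul _ _ _ hc]
end

end Network

theorem relu_parameter_bounding_general
    (γ : ℝ) (hγ : 0 < γ) (d l : ℕ)
    (U : Set (Fin d → ℝ)) (hU : IsCompact U)
    (h : (Fin d → ℝ) → Fin l → ℝ) (hh : Continuous h)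
    (ε : ℝ) (hε : 0 < ε) :
    ∃ (n : ℕ) (A : Matrix (Fin l) (Fin n) ℝ) (B : Matrix (Fin n) (Fin d) ℝ) (b : Fin n → ℝ),
      (∀ p i, |A p i| ≤ γ) ∧ (∀ i q, |B i q| ≤ γ) ∧ (∀ i, |b i| ≤ γ) ∧
      (∫ x in U, ∑ p, |h x p - A.mulVec (fun i => relu (B.mulVec x i + b i)) p|) ≤ ε := by
  set V := volume.real U
  have hV : 0 ≤ V := measureReal_nonneg
  set δ := ε / ((l + 1) * (V + 1))
  have hδ : 0 < δ := by positivity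
  choose f hf hfh using fun p =>
    exists_mem_reluSpan_approx hU ⟨fun x => h x p, by fun_prop⟩ hδ
  obtain ⟨S, A₀, hA₀⟩ := exists_reluNet_eq_of_mem_reluSpan hf
  obtain ⟨n, A, B, b, hA, hB, hb, hnet⟩ :=
    exists_reluNet_eq_params_abs_le A₀ (Matrix.of fun s : S => s.1.1) (fun s => s.1.2) hγ
  refine ⟨n, A, B, b, hA, hB, hb, ?_⟩
  have hpt : ∀ x ∈ U, ‖∑ p, |h x p - reluNet A B b x p|‖ ≤ l * δ := by
    intro x hx
    rw [hnet, Real.norm_of_nonneg (by positivity)]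
    simpa [hA₀] using Finset.sum_le_sum fun p (_ : p ∈ Finset.univ) => hfh p x hx
  calc _ ≤ l * δ * V :=
        (le_abs_self _).trans (norm_setIntegral_le_of_norm_le_const hU.measure_lt_top hpt)
    _ ≤ (l + 1) * δ * (V + 1) := by gcongr <;> linarith
    _ = ε := by simp only [δ]; field_simp

/-- The ReLU is a `γ`-parameter bounding activation for every `γ > 0`: any continuous
function on a compact set can be approximated in `L¹` (with the ℓ¹ norm on the output)
by a one-hidden-layer ReLU network all of whose individual parameters lie in `[-γ, γ]`. -/
theorem relu_parameter_bounding
    (γ : ℝ) (hγ : 0 < γ) (d l : ℕ) (hd : 1 ≤ d) (hl : 1 ≤ l)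
    (U : Set (Fin d → ℝ)) (hU : IsCompact U)
    (h : (Fin d → ℝ) → Fin l → ℝ) (hh : Continuous h)
    (ε : ℝ) (hε : 0 < ε) :
    ∃ (n : ℕ) (A : Matrix (Fin l) (Fin n) ℝ) (B : Matrix (Fin n) (Fin d) ℝ) (b : Fin n → ℝ),
      (∀ p i, |A p i| ≤ γ) ∧ (∀ i q, |B i q| ≤ γ) ∧ (∀ i, |b i| ≤ γ) ∧
      (∫ x in U, ∑ p, |h x p - A.mulVec (fun i => relu (B.mulVec x i + b i)) p|) ≤ ε :=
  relu_parameter_bounding_general γ hγ d l U hU h hh ε hε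
end

section
/- The Heaviside step function is a γ-parameter bounding activation for every γ > 0: for every γ > 0, every natural numbers d, l ≥ 1, every compact set U ⊆ ℝ^d, every continuous function h : ℝ^d → ℝ^l, and every ε > 0, there exist n ∈ ℕ and parameters A ∈ ℝ^{l×n}, B ∈ ℝ^{n×d}, b ∈ ℝ^n with every individual entry of A, B, and b lying in the interval [−γ, γ], such that ∫_U ‖h(x) − A·H(Bx + b)‖ dx ≤ ε, where H denotes the Heaviside step function applied entrywise and the integral is with respect to Lebesgue measure on ℝ^d. -/
open MeasureTheory

/-- The Heaviside step function: `H t = 1` if `t ≥ 0` and `H t = 0` if `t < 0`. -/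
noncomputable def heaviside (t : ℝ) : ℝ := if 0 ≤ t then 1 else 0

/-!
Since `heaviside (s * t) = heaviside t` for `s > 0`, dividing the weights and bias of a hidden
neuron by a large positive number does not change it, and splitting a neuron into `m` identical
copies whose output weights are divided by `m` does not change the network either. So the bounds
on the parameters cost nothing, and it suffices to approximate each component of `h` uniformly
on `U` by a linear combination of Heaviside ridge functions `x ↦ H (w ⬝ᵥ x + c)`.
The ridge functions `x ↦ exp (w ⬝ᵥ x)` span a point-separating algebra, so by Stone–Weierstrass
it is enough to approximate a single ridge function `x ↦ g (w ⬝ᵥ x)` with `g` continuous; a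
staircase `g t₀ + ∑ (g tᵢ₊₁ - g tᵢ) H (t - tᵢ₊₁)` with a fine mesh does this on the bounded range
of `w ⬝ᵥ x`. A uniform error `δ` in each of the `l` outputs costs at most `l δ vol U` in `L¹`.
-/

section

open Finset Matrix

lemma heaviside_mul_of_pos {s : ℝ} (hs : 0 < s) (t : ℝ) : heaviside (s * t) = heaviside t := by
  simp only [heaviside, mul_nonneg_iff_of_pos_left hs]

theorem staircase_eq (G : ℕ → ℝ) {a η t : ℝ} (hη : 0 < η) (hat : a ≤ t) {N : ℕ}
    (hN : ⌊(t - a) / η⌋₊ ≤ N) :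
    G 0 + ∑ i ∈ range N, (G (i + 1) - G i) * heaviside (t - (a + (i + 1) * η)) =
      G ⌊(t - a) / η⌋₊ := by
  set k := ⌊(t - a) / η⌋₊
  have hstep (i : ℕ) : heaviside (t - (a + (i + 1) * η)) = if i < k then 1 else 0 := by
    have : 0 ≤ t - (a + (i + 1) * η) ↔ i < k := by
      rw [Nat.lt_iff_add_one_le, Nat.le_floor_iff (div_nonneg (sub_nonneg.2 hat) hη.le),
        le_div_iff₀ hη]
      push_cast
      constructor <;> intro <;> linarith
    simp only [heaviside, this]
  have hfilter : (range N).filter (· < k) = range k := by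
    ext i; simp only [mem_filter, mem_range]; omega
  simp only [hstep, mul_ite, mul_one, mul_zero, sum_ite, sum_const_zero, add_zero, hfilter,
    sum_range_sub]
  ring

theorem exists_staircase_near {g : ℝ → ℝ} {a b : ℝ} (hg : ContinuousOn g (Set.Icc a b)) {δ : ℝ}
    (hδ : 0 < δ) : ∃ (N : ℕ) (c θ : ℕ → ℝ) (c₀ : ℝ), ∀ t ∈ Set.Icc a b,
      |g t - (c₀ + ∑ i ∈ range N, c i * heaviside (t - θ i))| ≤ δ := by
  obtain ⟨η, hη, hunif⟩ := Metric.uniformContinuousOn_iff.1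
    (isCompact_Icc.uniformContinuousOn_of_continuous hg) δ hδ
  set G : ℕ → ℝ := fun i => g (a + i * η)
  refine ⟨⌈(b - a) / η⌉₊, fun i => G (i + 1) - G i, fun i => a + (i + 1) * η, G 0,
    fun t ht => ?_⟩
  set k := ⌊(t - a) / η⌋₊
  have hk : k ≤ ⌈(b - a) / η⌉₊ :=
    (Nat.floor_le_floor (by gcongr; exact ht.2)).trans (Nat.floor_le_ceil _)
  have hkη : k * η ≤ t - a :=
    (le_div_iff₀ hη).1 (Nat.floor_le (div_nonneg (sub_nonneg.2 ht.1) hη.le))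
  have hkη' : t - a < (k + 1) * η := (div_lt_iff₀ hη).1 (Nat.lt_floor_add_one _)
  rw [staircase_eq G hη ht.1 hk]
  have hmem : a + k * η ∈ Set.Icc a b :=
    ⟨le_add_of_nonneg_right (by positivity), by linarith [ht.2]⟩
  have hclose := hunif t ht _ hmem (by rw [Real.dist_eq, abs_lt]; constructor <;> linarith)
  rw [Real.dist_eq] at hclose
  exact hclose.le

def Submodule.uniformClosureOn {X : Type*} (S : Submodule ℝ (X → ℝ)) (K : Set X) :
    Submodule ℝ (X → ℝ) where
  carrier := {f | ∀ δ > 0, ∃ g ∈ S, ∀ x ∈ K, |f x - g x| ≤ δ}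
  zero_mem' δ hδ := ⟨0, S.zero_mem, fun x _ => by simpa using hδ.le⟩
  add_mem' {f₁ f₂} hf₁ hf₂ δ hδ := by
    obtain ⟨g₁, hg₁, h₁⟩ := hf₁ (δ / 2) (half_pos hδ)
    obtain ⟨g₂, hg₂, h₂⟩ := hf₂ (δ / 2) (half_pos hδ)
    refine ⟨g₁ + g₂, S.add_mem hg₁ hg₂, fun x hx => ?_⟩
    calc |(f₁ + f₂) x - (g₁ + g₂) x| = |(f₁ x - g₁ x) + (f₂ x - g₂ x)| :=
        congrArg _ (add_sub_add_comm _ _ _ _)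
      _ ≤ |f₁ x - g₁ x| + |f₂ x - g₂ x| := abs_add_le _ _
      _ ≤ δ := by linarith [h₁ x hx, h₂ x hx]
  smul_mem' r f hf δ hδ := by
    obtain ⟨g, hg, hfg⟩ := hf (δ / (|r| + 1)) (by positivity)
    refine ⟨r • g, S.smul_mem r hg, fun x hx => ?_⟩
    calc |(r • f) x - (r • g) x| = |r| * |f x - g x| := by simp [← mul_sub, abs_mul]
      _ ≤ (|r| + 1) * (δ / (|r| + 1)) :=
          mul_le_mul (le_add_of_nonneg_right zero_le_one) (hfg x hx) (abs_nonneg _) (by positivity)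
      _ = δ := by field_simp

variable {κ : Type*} [Fintype κ]

variable (κ) in
def heavisideSpan : Submodule ℝ ((κ → ℝ) → ℝ) :=
  Submodule.span ℝ (Set.range fun (p : (κ → ℝ) × ℝ) (x : κ → ℝ) => heaviside (p.1 ⬝ᵥ x + p.2))

lemma heaviside_ridge_mem_heavisideSpan (w : κ → ℝ) (c : ℝ) :
    (fun x => heaviside (w ⬝ᵥ x + c)) ∈ heavisideSpan κ :=
  Submodule.subset_span ⟨(w, c), rfl⟩

lemma const_mem_heavisideSpan (r : ℝ) : (fun _ => r) ∈ heavisideSpan κ := by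
  convert (heavisideSpan κ).smul_mem r (heaviside_ridge_mem_heavisideSpan 0 0) using 1
  ext x
  simp [heaviside]

theorem ridge_mem_uniformClosureOn_heavisideSpan {g : ℝ → ℝ} (hg : Continuous g) (w : κ → ℝ)
    {K : Set (κ → ℝ)} (hK : IsCompact K) :
    (fun x => g (w ⬝ᵥ x)) ∈ (heavisideSpan κ).uniformClosureOn K := by
  intro δ hδ
  obtain ⟨C, hC⟩ := hK.exists_bound_of_continuousOn (f := fun x => w ⬝ᵥ x) (by fun_prop)
  obtain ⟨N, c, θ, c₀, hnear⟩ := exists_staircase_near (a := -C) (b := C) hg.continuousOn hδ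
  refine ⟨fun x => c₀ + ∑ i ∈ range N, c i * heaviside (w ⬝ᵥ x + -θ i), ?_,
    fun x hx => hnear _ (abs_le.1 (hC x hx))⟩
  refine (heavisideSpan κ).add_mem (const_mem_heavisideSpan c₀) ?_
  convert (heavisideSpan κ).sum_mem (t := range N) fun i _ =>
    (heavisideSpan κ).smul_mem (c i) (heaviside_ridge_mem_heavisideSpan w (-θ i)) using 1
  ext x
  simp

-- A monoid hom, so that the algebra generated by its range is just the span of its range.
variable (κ) in
noncomputable def expRidge : Multiplicative (κ → ℝ) →* C(κ → ℝ, ℝ) where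
  toFun w := ⟨fun x => Real.exp (w.toAdd ⬝ᵥ x), by fun_prop⟩
  map_one' := by ext x; simp
  map_mul' v w := by ext x; simp [add_dotProduct, Real.exp_add]

lemma separatesPoints_adjoin_expRidge :
    (Algebra.adjoin ℝ (MonoidHom.mrange (expRidge κ) : Set C(κ → ℝ, ℝ))).SeparatesPoints := by
  classical
  intro x y hxy
  obtain ⟨q, hq⟩ := Function.ne_iff.1 hxy
  refine ⟨_, ⟨expRidge κ (.ofAdd (Pi.single q 1)), Algebra.subset_adjoin ⟨_, rfl⟩, rfl⟩, ?_⟩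
  simpa [expRidge, single_dotProduct] using hq

lemma coe_mem_uniformClosureOn_of_mem_adjoin_expRidge {f : C(κ → ℝ, ℝ)}
    (hf : f ∈ Algebra.adjoin ℝ (MonoidHom.mrange (expRidge κ) : Set C(κ → ℝ, ℝ)))
    {K : Set (κ → ℝ)} (hK : IsCompact K) : ⇑f ∈ (heavisideSpan κ).uniformClosureOn K := by
  rw [← Subalgebra.mem_toSubmodule, Algebra.adjoin_eq_span, Submonoid.closure_eq] at hf
  refine (Submodule.span_le (p := ((heavisideSpan κ).uniformClosureOn K).comap
    (ContinuousMap.coeFnLinearMap ℝ))).2 ?_ hf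
  rintro _ ⟨w, rfl⟩
  exact ridge_mem_uniformClosureOn_heavisideSpan Real.continuous_exp w.toAdd hK

theorem continuous_mem_uniformClosureOn_heavisideSpan {f : (κ → ℝ) → ℝ} (hf : Continuous f)
    {K : Set (κ → ℝ)} (hK : IsCompact K) : f ∈ (heavisideSpan κ).uniformClosureOn K := by
  intro δ hδ
  obtain ⟨g, hgA, hfg⟩ :=
    ContinuousMap.exists_mem_subalgebra_near_continuous_of_isCompact_of_separatesPoints
      separatesPoints_adjoin_expRidge ⟨f, hf⟩ hK (half_pos hδ)
  obtain ⟨φ, hφ, hgφ⟩ :=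
    coe_mem_uniformClosureOn_of_mem_adjoin_expRidge hgA hK (δ / 2) (half_pos hδ)
  refine ⟨φ, hφ, fun x hx => ?_⟩
  have hfg : |f x - g x| < δ / 2 := by simpa [abs_sub_comm] using hfg x hx
  calc |f x - φ x| ≤ |f x - g x| + |g x - φ x| := abs_sub_le _ _ _
    _ ≤ δ := by linarith [hgφ x hx]

variable {o ι ι' : Type*} [Fintype ι] [Fintype ι']

noncomputable def heavisideNet (A : Matrix o ι ℝ) (B : Matrix ι κ ℝ) (b : ι → ℝ) (x : κ → ℝ) :
    o → ℝ :=
  A *ᵥ fun i => heaviside ((B *ᵥ x) i + b i)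

theorem exists_heavisideNet_eq_of_forall_mem_heavisideSpan [Fintype o] {G : (κ → ℝ) → o → ℝ}
    (hG : ∀ p, (fun x => G x p) ∈ heavisideSpan κ) :
    ∃ (S : Finset ((κ → ℝ) × ℝ)) (A : Matrix o S ℝ) (B : Matrix S κ ℝ) (b : S → ℝ),
      G = heavisideNet A B b := by
  classical
  choose c hc using fun p => Finsupp.mem_span_range_iff_exists_finsupp.1 (hG p)
  set S := univ.biUnion fun p => (c p).support
  refine ⟨S, fun p j => c p j, fun j => (j : (κ → ℝ) × ℝ).1, fun j => (j : (κ → ℝ) × ℝ).2, ?_⟩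
  ext x p
  have hp := congrFun (hc p) x
  rw [Finsupp.sum_of_support_subset (c p)
    (subset_biUnion_of_mem (fun p => (c p).support) (mem_univ p)) _ (by simp)] at hp
  rw [← hp, Finset.sum_apply, ← Finset.sum_coe_sort S]
  unfold heavisideNet
  rfl

lemma heavisideNet_diagonal_mul [DecidableEq ι] (A : Matrix o ι ℝ) (B : Matrix ι κ ℝ)
    (b : ι → ℝ) {s : ι → ℝ} (hs : ∀ i, 0 < s i) :
    heavisideNet A (diagonal s * B) (s * b) = heavisideNet A B b := by
  ext x : 1
  simp only [heavisideNet, ← mulVec_mulVec, mulVec_diagonal, Pi.mul_apply, ← mul_add,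
    heaviside_mul_of_pos (hs _)]

lemma heavisideNet_replicate (A : Matrix o ι ℝ) (B : Matrix ι κ ℝ) (b : ι → ℝ) (m : ℕ)
    [NeZero m] :
    heavisideNet ((m : ℝ)⁻¹ • A.submatrix id Prod.fst : Matrix o (ι × Fin m) ℝ)
      (B.submatrix Prod.fst id) (b ∘ Prod.fst) = heavisideNet A B b := by
  ext x p
  simp [heavisideNet, mulVec, dotProduct, Fintype.sum_prod_type, mul_assoc, ← mul_sum,
    inv_mul_cancel_left₀ ((Nat.cast_ne_zero (R := ℝ)).2 (NeZero.ne m))]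

lemma heavisideNet_reindex (A : Matrix o ι ℝ) (B : Matrix ι κ ℝ) (b : ι → ℝ) (e : ι ≃ ι') :
    heavisideNet (A.submatrix id e.symm) (B.submatrix e.symm id) (b ∘ e.symm) =
      heavisideNet A B b := by
  ext x p
  simp only [heavisideNet, mulVec, dotProduct]
  exact e.symm.sum_comp fun i => A p i * heaviside ((fun j => B i j) ⬝ᵥ x + b i)

theorem exists_bounded_heavisideNet_eq [Fintype o] (A : Matrix o ι ℝ) (B : Matrix ι κ ℝ)
    (b : ι → ℝ) {γ : ℝ} (hγ : 0 < γ) :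
    ∃ (n : ℕ) (A' : Matrix o (Fin n) ℝ) (B' : Matrix (Fin n) κ ℝ) (b' : Fin n → ℝ),
      (∀ p i, |A' p i| ≤ γ) ∧ (∀ i q, |B' i q| ≤ γ) ∧ (∀ i, |b' i| ≤ γ) ∧
      heavisideNet A' B' b' = heavisideNet A B b := by
  classical
  set r : ι → ℝ := fun i => 1 + ‖B i‖ + |b i|
  have hr (i : ι) : 0 < r i := by positivity
  set s : ι → ℝ := fun i => γ / r i
  have hs (i : ι) : 0 < s i := div_pos hγ (hr i)
  have hscale (i : ι) {t : ℝ} (ht : |t| ≤ r i) : |s i * t| ≤ γ := by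
    rw [abs_mul, abs_of_pos (hs i), div_mul_eq_mul_div, div_le_iff₀ (hr i)]
    exact mul_le_mul_of_nonneg_left ht hγ.le
  obtain ⟨m, hm⟩ := Finite.exists_le fun pi : o × ι => ⌈|A pi.1 pi.2| / γ⌉₊
  set e := Fintype.equivFin (ι × Fin (m + 1))
  refine ⟨_, (((m + 1 : ℕ) : ℝ)⁻¹ • A.submatrix id Prod.fst).submatrix id e.symm,
    ((diagonal s * B).submatrix Prod.fst id).submatrix e.symm id,
    ((s * b) ∘ Prod.fst) ∘ e.symm, fun p j => ?_, fun j q => ?_, fun j => ?_, ?_⟩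
  · have hA : |A p (e.symm j).1| / γ ≤ m + 1 :=
      ((Nat.le_ceil _).trans (Nat.cast_le.2 (hm (p, (e.symm j).1)))).trans (by simp)
    simp only [submatrix_apply, id, Matrix.smul_apply, smul_eq_mul, abs_mul]
    rw [abs_inv, Nat.abs_cast, inv_mul_le_iff₀ (by positivity)]
    push_cast
    exact (div_le_iff₀ hγ).1 hA
  · simp only [submatrix_apply, id, diagonal_mul]
    refine hscale _ ?_
    have hBi := norm_le_pi_norm (B (e.symm j).1) q
    rw [Real.norm_eq_abs] at hBi
    linarith [abs_nonneg (b (e.symm j).1)]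
  · refine hscale _ ?_
    linarith [norm_nonneg (B (e.symm j).1)]
  · rw [heavisideNet_reindex, heavisideNet_replicate, ← heavisideNet_diagonal_mul A B b hs]

theorem exists_heavisideNet_near [Fintype o] {K : Set (κ → ℝ)} (hK : IsCompact K)
    {h : (κ → ℝ) → o → ℝ} (hh : Continuous h) {δ : ℝ} (hδ : 0 < δ) :
    ∃ (S : Finset ((κ → ℝ) × ℝ)) (A : Matrix o S ℝ) (B : Matrix S κ ℝ) (b : S → ℝ),
      ∀ x ∈ K, ∀ p, |h x p - heavisideNet A B b x p| ≤ δ := by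
  choose g hg hnear using fun p =>
    continuous_mem_uniformClosureOn_heavisideSpan ((continuous_apply p).comp hh) hK δ hδ
  obtain ⟨S, A, B, b, hG⟩ :=
    exists_heavisideNet_eq_of_forall_mem_heavisideSpan (G := fun x p => g p x) hg
  exact ⟨S, A, B, b, fun x hx p => hG ▸ hnear p x hx⟩

end

theorem heaviside_parameter_bounding_general
    (γ : ℝ) (hγ : 0 < γ) (d l : ℕ)
    (U : Set (Fin d → ℝ)) (hU : IsCompact U)
    (h : (Fin d → ℝ) → Fin l → ℝ) (hh : Continuous h)
    (ε : ℝ) (hε : 0 < ε) :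
    ∃ (n : ℕ) (A : Matrix (Fin l) (Fin n) ℝ) (B : Matrix (Fin n) (Fin d) ℝ) (b : Fin n → ℝ),
      (∀ p i, |A p i| ≤ γ) ∧ (∀ i q, |B i q| ≤ γ) ∧ (∀ i, |b i| ≤ γ) ∧
      (∫ x in U, ∑ p, |h x p - A.mulVec (fun i => heaviside (B.mulVec x i + b i)) p|) ≤ ε := by
  set V := volume.real U
  set δ := ε / (l * V + 1)
  obtain ⟨S, A, B, b, hnear⟩ := exists_heavisideNet_near hU hh (δ := δ) (by positivity)
  obtain ⟨n, A', B', b', hA, hB, hb, heq⟩ := exists_bounded_heavisideNet_eq A B b hγ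
  refine ⟨n, A', B', b', hA, hB, hb, ?_⟩
  have hpointwise : ∀ x ∈ U, ‖∑ p, |h x p - heavisideNet A' B' b' x p|‖ ≤ l * δ := by
    intro x hx
    rw [heq, Real.norm_of_nonneg (by positivity)]
    simpa using Finset.sum_le_card_nsmul Finset.univ _ _ fun p _ => hnear x hx p
  calc _ ≤ ‖∫ x in U, ∑ p, |h x p - heavisideNet A' B' b' x p|‖ := Real.le_norm_self _
    _ ≤ l * δ * V := norm_setIntegral_le_of_norm_le_const hU.measure_lt_top hpointwise
    _ = ε * (l * V / (l * V + 1)) := by ring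
    _ ≤ ε := mul_le_of_le_one_right hε.le (div_le_one_of_le₀ (by linarith) (by positivity))

/-- The Heaviside step function is a `γ`-parameter bounding activation for every `γ > 0`:
any continuous function on a compact set can be approximated in `L¹` (with the ℓ¹ norm on
the output) by a one-hidden-layer Heaviside network all of whose individual parameters lie
in `[-γ, γ]`. -/
theorem heaviside_parameter_bounding
    (γ : ℝ) (hγ : 0 < γ) (d l : ℕ) (hd : 1 ≤ d) (hl : 1 ≤ l)
    (U : Set (Fin d → ℝ)) (hU : IsCompact U)
    (h : (Fin d → ℝ) → Fin l → ℝ) (hh : Continuous h)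
    (ε : ℝ) (hε : 0 < ε) :
    ∃ (n : ℕ) (A : Matrix (Fin l) (Fin n) ℝ) (B : Matrix (Fin n) (Fin d) ℝ) (b : Fin n → ℝ),
      (∀ p i, |A p i| ≤ γ) ∧ (∀ i q, |B i q| ≤ γ) ∧ (∀ i, |b i| ≤ γ) ∧
      (∫ x in U, ∑ p, |h x p - A.mulVec (fun i => heaviside (B.mulVec x i + b i)) p|) ≤ ε :=
  heaviside_parameter_bounding_general γ hγ d l U hU h hh ε hε
end

section
/- Random-network subnetwork matching lemma: Let n, d, l ≥ 1 be natural numbers, let γ > 0 and Δγ > 0 and set γ̄ = γ + Δγ. Let W* ∈ ℝ^{n×n}, B* ∈ ℝ^{n×d}, A* ∈ ℝ^{l×n}, b* ∈ ℝ^n have every entry in [−γ, γ]. Let ε' > 0 and δ ∈ (0,1), set ε = min(ε', Δγ) and ν = n(n + d + l + 1). Let k be a natural number with k ≥ log δ / log(1 − (ε/γ̄)^ν) and let m = k·n. Suppose W ∈ ℝ^{m×m}, B ∈ ℝ^{m×d}, A ∈ ℝ^{l×m}, b ∈ ℝ^m have all entries given by mutually independent random variables, each uniformly distributed on [−γ̄,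 γ̄]. Then with probability at least 1 − δ there exists a strictly increasing map σ : {1,…,n} → {1,…,m} such that |W_{σ(i),σ(j)} − W*_{i,j}| < ε' for all i, j ∈ {1,…,n}, |B_{σ(i),q} − B*_{i,q}| < ε' for all i ∈ {1,…,n} and q ∈ {1,…,d}, |A_{p,σ(i)} − A*_{p,i}| < ε' for all p ∈ {1,…,l} and i ∈ {1,…,n}, and |b_{σ(i)} − b*_i| < ε' for all i ∈ {1,…,n}. -/
open MeasureTheory

/-- The uniform probability measure on the interval `[-R, R]`. -/
noncomputable def unif (R : ℝ) : Measure ℝ :=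
  (volume (Set.Icc (-R) R))⁻¹ • volume.restrict (Set.Icc (-R) R)

/-- Index type for the parameters of a width-`m` recurrent network with input dimension
`d` and output dimension `l`: recurrent entries, input entries, output entries, biases. -/
abbrev ParamIdx (m d l : ℕ) := (Fin m × Fin m) ⊕ (Fin m × Fin d) ⊕ (Fin l × Fin m) ⊕ Fin m

/-!
Split the `k * n` hidden units into `k` blocks of `n` consecutive units. A block, read as a
network of width `n`, matches the target to within `ε = min ε' Δγ` with probability exactly
`(ε/γ̄)^ν`: each of its `ν` parameters must land in an interval of length `2ε`, which lies
inside `[-γ̄, γ̄]` because the target entries are bounded by `γ` and `ε ≤ Δγ`. Distinct blocks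
read disjoint sets of independent parameters, so all `k` of them fail with probability
`(1 - (ε/γ̄)^ν)^k`, which the bound on `k` makes at most `δ`.
-/

lemma unif_apply (R : ℝ) (s : Set ℝ) :
    unif R s = (ENNReal.ofReal (2 * R))⁻¹ * volume (s ∩ Set.Icc (-R) R) := by
  have h : R - (-R) = 2 * R := by ring
  simp [unif, Measure.restrict_apply' measurableSet_Icc, Real.volume_Icc, h]

lemma isProbabilityMeasure_unif {R : ℝ} (hR : 0 < R) : IsProbabilityMeasure (unif R) := by
  constructor
  rw [unif_apply, Set.univ_inter, Real.volume_Icc, show R - -R = 2 * R by ring]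
  exact ENNReal.inv_mul_cancel (by simpa using hR) ENNReal.ofReal_ne_top

lemma unif_Ioo_sub_add {R c ε : ℝ} (hR : 0 < R) (h : |c| + ε ≤ R) :
    unif R (Set.Ioo (c - ε) (c + ε)) = ENNReal.ofReal (ε / R) := by
  have hsub : Set.Ioo (c - ε) (c + ε) ⊆ Set.Icc (-R) R := fun x hx =>
    ⟨by linarith [hx.1, neg_abs_le c], by linarith [hx.2, le_abs_self c]⟩
  rw [unif_apply, Set.inter_eq_left.2 hsub, Real.volume_Ioo,
    ← ENNReal.ofReal_inv_of_pos (by positivity), ← ENNReal.ofReal_mul (by positivity)]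
  congr 1
  field_simp
  ring

theorem measurePreserving_comp_of_injective {ι κ α : Type*} [Fintype ι] [Fintype κ]
    [MeasurableSpace α] (μ : ι → Measure α) [∀ i, IsProbabilityMeasure (μ i)]
    {e : κ → ι} (he : e.Injective) :
    MeasurePreserving (fun ω : ι → α => ω ∘ e) (Measure.pi μ) (Measure.pi fun j => μ (e j)) := by
  classical
  have hmeas : Measurable fun ω : ι → α => ω ∘ e :=
    measurable_pi_lambda _ fun j => measurable_pi_apply (e j)
  refine ⟨hmeas, (Measure.pi_eq fun s hs => ?_).symm⟩
  set t : ι → Set α := Function.extend e s fun _ => Set.univ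
  have ht_of_notMem : ∀ i ∉ Set.range e, t i = Set.univ := fun i hi =>
    Function.extend_apply' _ _ _ (by simpa using hi)
  have hpre : (fun ω : ι → α => ω ∘ e) ⁻¹' Set.univ.pi s = Set.univ.pi t := by
    ext ω
    simp only [Set.mem_preimage, Set.mem_univ_pi, Function.comp_apply]
    refine ⟨fun h i => ?_, fun h j => by simpa [t, he.extend_apply] using h (e j)⟩
    by_cases hi : i ∈ Set.range e
    · obtain ⟨j, rfl⟩ := hi
      simpa [t, he.extend_apply] using h j
    · simp [ht_of_notMem i hi]
  rw [Measure.map_apply hmeas (MeasurableSet.univ_pi hs), hpre, Measure.pi_pi]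
  exact (Fintype.prod_of_injective e he _ _ (fun i hi => by simp [ht_of_notMem i hi])
    fun j => by simp [t, he.extend_apply]).symm

theorem measurePreserving_curry {κ C α : Type*} [Fintype κ] [Fintype C] [MeasurableSpace α]
    (μ : κ × C → Measure α) [∀ i, SigmaFinite (μ i)] :
    MeasurePreserving (MeasurableEquiv.curry κ C α) (Measure.pi μ)
      (Measure.pi fun t => Measure.pi fun c => μ (t, c)) := by
  refine MeasurePreserving.symm _ ⟨(MeasurableEquiv.curry κ C α).symm.measurable,
    (Measure.pi_eq fun s hs => ?_).symm⟩
  have hpre : (MeasurableEquiv.curry κ C α).symm ⁻¹' Set.univ.pi s =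
      Set.univ.pi fun t => Set.univ.pi fun c => s (t, c) := by
    ext ω
    simp [MeasurableEquiv.curry]
  rw [Measure.map_apply (MeasurableEquiv.curry κ C α).symm.measurable (MeasurableSet.univ_pi hs),
    hpre, Measure.pi_pi]
  simp_rw [Measure.pi_pi, Fintype.prod_prod_type]

theorem measure_pi_exists_block_forall_mem {ι κ C α : Type*} [Fintype ι] [Fintype κ] [Fintype C]
    [MeasurableSpace α] (μ : Measure α) [IsProbabilityMeasure μ] {e : κ × C → ι}
    (he : e.Injective) {s : C → Set α} (hs : ∀ c, MeasurableSet (s c)) :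
    Measure.pi (fun _ : ι => μ) {ω | ∃ t, ∀ c, ω (e (t, c)) ∈ s c} =
      1 - (1 - ∏ c, μ (s c)) ^ Fintype.card κ := by
  have hblocks := (measurePreserving_curry fun _ : κ × C => μ).comp
    (measurePreserving_comp_of_injective (fun _ : ι => μ) he)
  have hmiss : MeasurableSet (Set.univ.pi fun _ : κ => (Set.univ.pi s)ᶜ) :=
    MeasurableSet.univ_pi fun _ => (MeasurableSet.univ_pi hs).compl
  have hpre : {ω : ι → α | ∃ t, ∀ c, ω (e (t, c)) ∈ s c} =
      ((MeasurableEquiv.curry κ C α) ∘ fun ω => ω ∘ e) ⁻¹'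
        (Set.univ.pi fun _ => (Set.univ.pi s)ᶜ)ᶜ := by
    ext ω
    simp [MeasurableEquiv.curry]
  rw [hpre, hblocks.measure_preimage hmiss.compl.nullMeasurableSet, prob_compl_eq_one_sub hmiss,
    Measure.pi_pi]
  simp_rw [prob_compl_eq_one_sub (MeasurableSet.univ_pi hs), Measure.pi_pi, Finset.prod_const,
    Finset.card_univ]

def ParamIdx.map {n m d l : ℕ} (u : Fin n → Fin m) : ParamIdx n d l → ParamIdx m d l :=
  Sum.map (Prod.map u u) (Sum.map (Prod.map u id) (Sum.map (Prod.map id u) u))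

-- Unit `i` of the `t`-th block: the unit numbered `n * t + i`.
def blockUnit (k n : ℕ) (t : Fin k) (i : Fin n) : Fin (k * n) := finProdFinEquiv (t, i)

lemma blockUnit_strictMono (k n : ℕ) (t : Fin k) : StrictMono (blockUnit k n t) := by
  intro i j hij
  simp only [blockUnit, Fin.lt_def, finProdFinEquiv_apply_val] at hij ⊢
  omega

lemma blockParam_injective (k n d l : ℕ) :
    (fun tc : Fin k × ParamIdx n d l => ParamIdx.map (blockUnit k n tc.1) tc.2).Injective := by
  have hu : ∀ t t' i i', blockUnit k n t i = blockUnit k n t' i' ↔ t = t' ∧ i = i' := by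
    simp [blockUnit, finProdFinEquiv.injective.eq_iff]
  rintro ⟨t, ⟨i, j⟩ | ⟨i, q⟩ | ⟨p, i⟩ | i⟩ ⟨t', ⟨i', j'⟩ | ⟨i', q'⟩ | ⟨p', i'⟩ | i'⟩ h <;>
    simp_all [ParamIdx.map]

def paramVec {n d l : ℕ} (W : Matrix (Fin n) (Fin n) ℝ) (B : Matrix (Fin n) (Fin d) ℝ)
    (A : Matrix (Fin l) (Fin n) ℝ) (b : Fin n → ℝ) : ParamIdx n d l → ℝ :=
  Sum.elim (Function.uncurry W) (Sum.elim (Function.uncurry B) (Sum.elim (Function.uncurry A) b))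

lemma card_paramIdx (n d l : ℕ) : Fintype.card (ParamIdx n d l) = n * (n + d + l + 1) := by
  simp only [Fintype.card_sum, Fintype.card_prod, Fintype.card_fin]
  ring

lemma pow_le_of_log_div_log_le {r δ : ℝ} {k : ℕ} (hr₀ : 0 < r) (hr₁ : r < 1) (hδ : 0 < δ)
    (hk : Real.log δ / Real.log r ≤ k) : r ^ k ≤ δ := by
  rw [← Real.log_le_log_iff (pow_pos hr₀ k) hδ, Real.log_pow]
  exact (div_le_iff_of_neg (Real.log_neg hr₀ hr₁)).1 hk

theorem random_subnetwork_matching_general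
    (n d l : ℕ) (hn : 1 ≤ n)
    (γ Δγ : ℝ) (hγ : 0 < γ) (hΔγ : 0 < Δγ)
    (Wstar : Matrix (Fin n) (Fin n) ℝ) (Bstar : Matrix (Fin n) (Fin d) ℝ)
    (Astar : Matrix (Fin l) (Fin n) ℝ) (bstar : Fin n → ℝ)
    (hWs : ∀ i j, |Wstar i j| ≤ γ) (hBs : ∀ i q, |Bstar i q| ≤ γ)
    (hAs : ∀ p i, |Astar p i| ≤ γ) (hbs : ∀ i, |bstar i| ≤ γ)
    (ε' δ : ℝ) (hε' : 0 < ε') (hδ : δ ∈ Set.Ioo (0 : ℝ) 1)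
    (k : ℕ)
    (hk : (k : ℝ) ≥ Real.log δ /
      Real.log (1 - (min ε' Δγ / (γ + Δγ)) ^ (n * (n + d + l + 1)))) :
    ENNReal.ofReal (1 - δ) ≤
      Measure.pi (fun _ : ParamIdx (k * n) d l => unif (γ + Δγ))
        {ω | ∃ σ : Fin n → Fin (k * n), StrictMono σ ∧
          (∀ i j, |ω (Sum.inl (σ i, σ j)) - Wstar i j| < ε') ∧
          (∀ i q, |ω (Sum.inr (Sum.inl (σ i, q))) - Bstar i q| < ε') ∧
          (∀ p i, |ω (Sum.inr (Sum.inr (Sum.inl (p, σ i)))) - Astar p i| < ε') ∧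
          (∀ i, |ω (Sum.inr (Sum.inr (Sum.inr (σ i)))) - bstar i| < ε')} := by
  set R := γ + Δγ
  set ε := min ε' Δγ
  have hR : 0 < R := add_pos hγ hΔγ
  have := isProbabilityMeasure_unif hR
  set target := paramVec Wstar Bstar Astar bstar
  have htarget : ∀ c, |target c| ≤ γ := by
    rintro (⟨i, j⟩ | ⟨i, q⟩ | ⟨p, i⟩ | i)
    exacts [hWs i j, hBs i q, hAs p i, hbs i]
  have hhit : ∀ c, unif R (Set.Ioo (target c - ε) (target c + ε)) = ENNReal.ofReal (ε / R) :=
    fun c => unif_Ioo_sub_add hR (by linarith [htarget c, min_le_right ε' Δγ])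
  have hgood := measure_pi_exists_block_forall_mem (unif R) (blockParam_injective k n d l)
    (fun c => measurableSet_Ioo (a := target c - ε) (b := target c + ε))
  simp only [hhit, Finset.prod_const, Finset.card_univ, card_paramIdx, Fintype.card_fin] at hgood
  set q := (ε / R) ^ (n * (n + d + l + 1))
  have hq₀ : 0 < q := pow_pos (div_pos (lt_min hε' hΔγ) hR) _
  have hq₁ : q < 1 := pow_lt_one₀ (by positivity)
    ((div_lt_one hR).2 (by linarith [min_le_right ε' Δγ])) (Nat.mul_ne_zero (by omega) (by omega))
  have hmiss : (1 - q) ^ k ≤ δ := pow_le_of_log_div_log_le (by linarith) (by linarith) hδ.1 hk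
  calc ENNReal.ofReal (1 - δ) ≤ 1 - ENNReal.ofReal ((1 - q) ^ k) := by
        rw [ENNReal.ofReal_sub _ hδ.1.le, ENNReal.ofReal_one]
        exact tsub_le_tsub_left (ENNReal.ofReal_le_ofReal hmiss) 1
    _ = Measure.pi (fun _ => unif R) {ω | ∃ t, ∀ c,
          ω (ParamIdx.map (blockUnit k n t) c) ∈ Set.Ioo (target c - ε) (target c + ε)} := by
        rw [hgood, ENNReal.ofReal_pow (by linarith), ENNReal.ofReal_sub _ hq₀.le,
          ENNReal.ofReal_one, ENNReal.ofReal_pow (by positivity)]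
    _ ≤ _ := by
        refine measure_mono fun ω ⟨t, ht⟩ => ⟨blockUnit k n t, blockUnit_strictMono k n t, ?_⟩
        have hclose : ∀ c, |ω (ParamIdx.map (blockUnit k n t) c) - target c| < ε' := fun c =>
          (abs_sub_lt_iff.2 ⟨by linarith [(ht c).2], by linarith [(ht c).1]⟩).trans_le
            (min_le_left ε' Δγ)
        exact ⟨fun i j => hclose (.inl (i, j)), fun i q => hclose (.inr (.inl (i, q))),
          fun p i => hclose (.inr (.inr (.inl (p, i)))), fun i => hclose (.inr (.inr (.inr i)))⟩

/-- Random-network subnetwork matching lemma: given target parameters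
`W* ∈ ℝ^{n×n}, B* ∈ ℝ^{n×d}, A* ∈ ℝ^{l×n}, b* ∈ ℝ^n` with entries in `[-γ, γ]`, and a
random network of width `m = k·n` whose parameters are mutually independent and uniform
on `[-γ̄, γ̄]` with `γ̄ = γ + Δγ`, if `k ≥ log δ / log (1 - (ε/γ̄)^ν)` where
`ε = min ε' Δγ` and `ν = n(n+d+l+1)`, then with probability at least `1 - δ` there is a
strictly increasing selection of `n` hidden units whose parameters match the target
parameters to within `ε'`. -/
theorem random_subnetwork_matching
    (n d l : ℕ) (hn : 1 ≤ n) (hd : 1 ≤ d) (hl : 1 ≤ l)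
    (γ Δγ : ℝ) (hγ : 0 < γ) (hΔγ : 0 < Δγ)
    (Wstar : Matrix (Fin n) (Fin n) ℝ) (Bstar : Matrix (Fin n) (Fin d) ℝ)
    (Astar : Matrix (Fin l) (Fin n) ℝ) (bstar : Fin n → ℝ)
    (hWs : ∀ i j, |Wstar i j| ≤ γ) (hBs : ∀ i q, |Bstar i q| ≤ γ)
    (hAs : ∀ p i, |Astar p i| ≤ γ) (hbs : ∀ i, |bstar i| ≤ γ)
    (ε' δ : ℝ) (hε' : 0 < ε') (hδ : δ ∈ Set.Ioo (0 : ℝ) 1)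
    (k : ℕ)
    (hk : (k : ℝ) ≥ Real.log δ /
      Real.log (1 - (min ε' Δγ / (γ + Δγ)) ^ (n * (n + d + l + 1)))) :
    ENNReal.ofReal (1 - δ) ≤
      Measure.pi (fun _ : ParamIdx (k * n) d l => unif (γ + Δγ))
        {ω | ∃ σ : Fin n → Fin (k * n), StrictMono σ ∧
          (∀ i j, |ω (Sum.inl (σ i, σ j)) - Wstar i j| < ε') ∧
          (∀ i q, |ω (Sum.inr (Sum.inl (σ i, q))) - Bstar i q| < ε') ∧
          (∀ p i, |ω (Sum.inr (Sum.inr (Sum.inl (p, σ i)))) - Astar p i| < ε') ∧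
          (∀ i, |ω (Sum.inr (Sum.inr (Sum.inr (σ i)))) - bstar i| < ε')} :=
  random_subnetwork_matching_general n d l hn γ Δγ hγ hΔγ Wstar Bstar Astar bstar hWs hBs hAs hbs ε'
    δ hε' hδ k hk
end

section
/- Perturbation bound for one-hidden-layer networks (Lemma B.4 of the paper): Let n, d, l ≥ 1 be natural numbers, let φ : ℝ → ℝ be Lipschitz with constant K_φ, and let M_x, M_φ, γ̄, ε > 0. Let A ∈ ℝ^{l×n}, B ∈ ℝ^{n×d}, b ∈ ℝ^n be target parameters and A' ∈ ℝ^{l×n}, B' ∈ ℝ^{n×d}, b' ∈ ℝ^n be perturbed parameters satisfying: |A'_{p,i}| ≤ γ̄ for all p, i; |A'_{p,i} − A_{p,i}| < ε, |B'_{i,q} − B_{i,q}| < ε, and |b'_i − b_i| < ε for all indices. Let x ∈ ℝ^d satisfy ‖x‖ ≤ M_x and suppose |φ(B_{i,:} x + b_i)| ≤ M_φ for every i ∈ {1,…,n}. Then ‖A'·φ(B'x + b') − A·φ(Bx + b)‖ ≤ n·l·(γ̄·K_φ·(M_x + 1) + M_φ)·ε, where φ is applied entrywise. -/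
/-! The hidden pre-activations move by at most `ε (M_x + 1)`, so by the Lipschitz bound the
hidden activations move by at most `K_φ ε (M_x + 1)`. Each output coordinate then splits as
`A' (u' - u) + (A' - A) u`, whose `n` terms are each at most `γ̄ K_φ ε (M_x + 1) + ε M_φ`;
summing over the `l` output coordinates gives the bound. -/

open Finset Matrix

lemma nonneg_of_forall_abs_sub_le_mul_abs_sub {φ : ℝ → ℝ} {K : ℝ}
    (hφ : ∀ s t : ℝ, |φ s - φ t| ≤ K * |s - t|) : 0 ≤ K :=
  (abs_nonneg _).trans (by simpa using hφ 1 0)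

section MulVecPerturbation

variable {ι κ : Type*} [Fintype ι]

lemma abs_mulVec_sub_mulVec_le {B B' : Matrix κ ι ℝ} {ε : ℝ}
    (hB : ∀ i q, |B' i q - B i q| ≤ ε) (x : ι → ℝ) (i : κ) :
    |(B' *ᵥ x) i - (B *ᵥ x) i| ≤ ε * ∑ q, |x q| := by
  rw [← Pi.sub_apply, ← sub_mulVec, mulVec, dotProduct, mul_sum]
  refine (abs_sum_le_sum_abs _ _).trans (sum_le_sum fun q _ => ?_)
  rw [abs_mul]
  exact mul_le_mul_of_nonneg_right (hB i q) (abs_nonneg _)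

lemma abs_mulVec_sub_mulVec_le_of_perturbation {A A' : Matrix κ ι ℝ} {u u' : ι → ℝ}
    {γ ε δ M : ℝ} (hA'_bd : ∀ p i, |A' p i| ≤ γ) (hA : ∀ p i, |A' p i - A p i| ≤ ε)
    (hu : ∀ i, |u' i - u i| ≤ δ) (hu_bd : ∀ i, |u i| ≤ M) (p : κ) :
    |(A' *ᵥ u') p - (A *ᵥ u) p| ≤ Fintype.card ι * (γ * δ + ε * M) := by
  have hterm : ∀ i, |A' p i * u' i - A p i * u i| ≤ γ * δ + ε * M := fun i => by
    have hsplit : A' p i * u' i - A p i * u i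
        = A' p i * (u' i - u i) + (A' p i - A p i) * u i := by ring
    rw [hsplit]
    refine (abs_add_le _ _).trans (add_le_add ?_ ?_) <;> rw [abs_mul]
    · exact mul_le_mul (hA'_bd p i) (hu i) (abs_nonneg _) ((abs_nonneg _).trans (hA'_bd p i))
    · exact mul_le_mul (hA p i) (hu_bd i) (abs_nonneg _) ((abs_nonneg _).trans (hA p i))
  rw [mulVec, mulVec, dotProduct, dotProduct, ← sum_sub_distrib]
  refine (abs_sum_le_sum_abs _ _).trans ?_
  simpa only [card_univ, nsmul_eq_mul] using sum_le_card_nsmul univ _ _ fun i _ => hterm i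

lemma sum_abs_mulVec_sub_mulVec_le_of_perturbation [Fintype κ] {A A' : Matrix κ ι ℝ}
    {u u' : ι → ℝ} {γ ε δ M : ℝ} (hA'_bd : ∀ p i, |A' p i| ≤ γ)
    (hA : ∀ p i, |A' p i - A p i| ≤ ε) (hu : ∀ i, |u' i - u i| ≤ δ) (hu_bd : ∀ i, |u i| ≤ M) :
    ∑ p, |(A' *ᵥ u') p - (A *ᵥ u) p|
      ≤ Fintype.card κ * Fintype.card ι * (γ * δ + ε * M) := by
  rw [mul_assoc]
  simpa only [card_univ, nsmul_eq_mul] using sum_le_card_nsmul univ _ _ fun p _ =>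
    abs_mulVec_sub_mulVec_le_of_perturbation hA'_bd hA hu hu_bd p

end MulVecPerturbation

theorem one_hidden_layer_perturbation_bound_general
    (n d l : ℕ)
    (φ : ℝ → ℝ) (Kφ : ℝ) (hφ : ∀ s t : ℝ, |φ s - φ t| ≤ Kφ * |s - t|)
    (Mx Mφ γbar ε : ℝ) (hε : 0 < ε)
    (A A' : Matrix (Fin l) (Fin n) ℝ) (B B' : Matrix (Fin n) (Fin d) ℝ) (b b' : Fin n → ℝ)
    (hA'bd : ∀ p i, |A' p i| ≤ γbar)
    (hA : ∀ p i, |A' p i - A p i| < ε)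
    (hB : ∀ i q, |B' i q - B i q| < ε)
    (hb : ∀ i, |b' i - b i| < ε)
    (x : Fin d → ℝ) (hx : ∑ q, |x q| ≤ Mx)
    (hφbd : ∀ i, |φ (B.mulVec x i + b i)| ≤ Mφ) :
    ∑ p, |A'.mulVec (fun i => φ (B'.mulVec x i + b' i)) p
          - A.mulVec (fun i => φ (B.mulVec x i + b i)) p|
      ≤ (n : ℝ) * l * (γbar * Kφ * (Mx + 1) + Mφ) * ε := by
  have hpre : ∀ i, |(B'.mulVec x i + b' i) - (B.mulVec x i + b i)| ≤ ε * (Mx + 1) := fun i =>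
    calc |(B'.mulVec x i + b' i) - (B.mulVec x i + b i)|
        ≤ |B'.mulVec x i - B.mulVec x i| + |b' i - b i| := by
          rw [add_sub_add_comm]; exact abs_add_le _ _
      _ ≤ ε * ∑ q, |x q| + ε :=
          add_le_add (abs_mulVec_sub_mulVec_le (fun i q => (hB i q).le) x i) (hb i).le
      _ ≤ ε * (Mx + 1) := by rw [mul_add_one]; gcongr
  have hact : ∀ i, |φ (B'.mulVec x i + b' i) - φ (B.mulVec x i + b i)|
      ≤ Kφ * (ε * (Mx + 1)) := fun i =>
    (hφ _ _).trans (mul_le_mul_of_nonneg_left (hpre i)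
      (nonneg_of_forall_abs_sub_le_mul_abs_sub hφ))
  calc _ ≤ Fintype.card (Fin l) * Fintype.card (Fin n)
          * (γbar * (Kφ * (ε * (Mx + 1))) + ε * Mφ) :=
        sum_abs_mulVec_sub_mulVec_le_of_perturbation hA'bd (fun p i => (hA p i).le) hact hφbd
    _ = (n : ℝ) * l * (γbar * Kφ * (Mx + 1) + Mφ) * ε := by
        simp only [Fintype.card_fin]; ring

/-- Perturbation bound for one-hidden-layer networks: if the perturbed output weights are
bounded by `γ̄`, every perturbed parameter is within `ε` of the corresponding target
parameter, the input has ℓ¹ norm at most `M_x`, and the target hidden-unit activations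
are bounded by `M_φ`, then the ℓ¹ distance between the perturbed and target network
outputs is at most `n·l·(γ̄·K_φ·(M_x + 1) + M_φ)·ε`. -/
theorem one_hidden_layer_perturbation_bound
    (n d l : ℕ) (hn : 1 ≤ n) (hd : 1 ≤ d) (hl : 1 ≤ l)
    (φ : ℝ → ℝ) (Kφ : ℝ) (hφ : ∀ s t : ℝ, |φ s - φ t| ≤ Kφ * |s - t|)
    (Mx Mφ γbar ε : ℝ) (hMx : 0 < Mx) (hMφ : 0 < Mφ) (hγbar : 0 < γbar) (hε : 0 < ε)
    (A A' : Matrix (Fin l) (Fin n) ℝ) (B B' : Matrix (Fin n) (Fin d) ℝ) (b b' : Fin n → ℝ)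
    (hA'bd : ∀ p i, |A' p i| ≤ γbar)
    (hA : ∀ p i, |A' p i - A p i| < ε)
    (hB : ∀ i q, |B' i q - B i q| < ε)
    (hb : ∀ i, |b' i - b i| < ε)
    (x : Fin d → ℝ) (hx : ∑ q, |x q| ≤ Mx)
    (hφbd : ∀ i, |φ (B.mulVec x i + b i)| ≤ Mφ) :
    ∑ p, |A'.mulVec (fun i => φ (B'.mulVec x i + b' i)) p
          - A.mulVec (fun i => φ (B.mulVec x i + b i)) p|
      ≤ (n : ℝ) * l * (γbar * Kφ * (Mx + 1) + Mφ) * ε :=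
  one_hidden_layer_perturbation_bound_general n d l φ Kφ hφ Mx Mφ γbar ε hε A A' B B' b b' hA'bd hA
    hB hb x hx hφbd
end

section
/- Hidden-state perturbation bound for recurrent networks (Lemma B.5 of the paper, hidden-state part): Let n, d ≥ 1 be natural numbers, α ≥ 0, β > 0, and let φ : ℝ → ℝ be Lipschitz with constant K_φ. Let ε, γ̄, R_r, R_x > 0 with ε ≤ 1 and set R̃ = R_x + R_r + 1. Let W, W' ∈ ℝ^{n×n}, B, B' ∈ ℝ^{n×d}, b, b' ∈ ℝ^n satisfy: |W'_{i,j}| ≤ γ̄ for all i, j; |W'_{i,j} − W_{i,j}| < ε, |B'_{i,q} − B_{i,q}| < ε, and |b'_i − b_i| < ε for all indices. Let T ≥ 1 and let x_0, …, x_{T−1} ∈ ℝ^d with ‖x_t‖ ≤ R_x for all t. Define the trajectories r_t = −α r_{t−1} + β·φ(W r_{t−1} + B x_{t−1} + b) and r'_t = −α r'_{t−1} + β·φ(W' r'_{t−1} + B' x_{t−1} + b') with r'_0 = r_0, and suppose ‖r_t‖ ≤ R_r for all 0 ≤ t ≤ T − 1. Then for every 0 ≤ t ≤ T, ‖r'_t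 − r_t‖ ≤ n·β·K_φ·R̃·(Σ_{j=0}^{t−1} (α + β·K_φ·n·γ̄)^j)·ε. -/
/-- Hidden-state trajectory of the RNN
`r_t = -α r_{t-1} + β · φ (W r_{t-1} + B x_{t-1} + b)` (with activation `φ` applied
entrywise) started at `r0`. -/
def rnnTrajP {n d : ℕ} (φ : ℝ → ℝ) (α β : ℝ) (W : Matrix (Fin n) (Fin n) ℝ)
    (B : Matrix (Fin n) (Fin d) ℝ) (b : Fin n → ℝ)
    (x : ℕ → Fin d → ℝ) (r0 : Fin n → ℝ) : ℕ → Fin n → ℝ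
  | 0 => r0
  | t + 1 => fun i =>
      -α * rnnTrajP φ α β W B b x r0 t i
        + β * φ (W.mulVec (rnnTrajP φ α β W B b x r0 t) i + B.mulVec (x t) i + b i)

lemma rnn_step_bound' {n d : ℕ} (α β : ℝ) (hα : 0 ≤ α) (hβ : 0 < β)
    (φ : ℝ → ℝ) (Kφ : ℝ) (hKφ : 0 ≤ Kφ)
    (hφ : ∀ s t : ℝ, |φ s - φ t| ≤ Kφ * |s - t|)
    (ε γbar Rr Rx : ℝ) (hε : 0 < ε)
    (W W' : Matrix (Fin n) (Fin n) ℝ) (B B' : Matrix (Fin n) (Fin d) ℝ) (b b' : Fin n → ℝ)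
    (hW'bd : ∀ i j, |W' i j| ≤ γbar)
    (hW : ∀ i j, |W' i j - W i j| < ε)
    (hB : ∀ i q, |B' i q - B i q| < ε)
    (hb : ∀ i, |b' i - b i| < ε)
    (r r' : Fin n → ℝ) (xt : Fin d → ℝ)
    (hrb : ∑ i, |r i| ≤ Rr) (hxb : ∑ q, |xt q| ≤ Rx) :
    ∑ i, |(-α * r' i + β * φ (W'.mulVec r' i + B'.mulVec xt i + b' i))
          - (-α * r i + β * φ (W.mulVec r i + B.mulVec xt i + b i))|
      ≤ (α + β * Kφ * (n : ℝ) * γbar) * (∑ i, |r' i - r i|)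
          + (n : ℝ) * β * Kφ * (Rx + Rr + 1) * ε := by
  have hD : (0:ℝ) ≤ ∑ j, |r' j - r j| := Finset.sum_nonneg fun j _ => abs_nonneg _
  have key : ∀ i ∈ (Finset.univ : Finset (Fin n)),
      |(-α * r' i + β * φ (W'.mulVec r' i + B'.mulVec xt i + b' i))
          - (-α * r i + β * φ (W.mulVec r i + B.mulVec xt i + b i))|
        ≤ α * |r' i - r i|
          + β * (Kφ * (γbar * (∑ j, |r' j - r j|) + ε * Rr + ε * Rx + ε)) := by
    intro i _
    set a := W'.mulVec r' i + B'.mulVec xt i + b' i with ha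
    set c := W.mulVec r i + B.mulVec xt i + b i with hc
    have hac : |a - c| ≤ γbar * (∑ j, |r' j - r j|) + ε * Rr + ε * Rx + ε := by
      have h1 : (∑ j, W' i j * r' j) - (∑ j, W i j * r j)
          = ∑ j, (W' i j * (r' j - r j) + (W' i j - W i j) * r j) := by
        rw [← Finset.sum_sub_distrib]
        exact Finset.sum_congr rfl fun j _ => by ring
      have h2 : (∑ q, B' i q * xt q) - (∑ q, B i q * xt q)
          = ∑ q, (B' i q - B i q) * xt q := by
        rw [← Finset.sum_sub_distrib]
        exact Finset.sum_congr rfl fun q _ => by ring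
      have heq : a - c = (∑ j, (W' i j * (r' j - r j) + (W' i j - W i j) * r j))
          + (∑ q, (B' i q - B i q) * xt q) + (b' i - b i) := by
        simp only [ha, hc, Matrix.mulVec, dotProduct]
        linarith [h1, h2]
      have hA : |∑ j, (W' i j * (r' j - r j) + (W' i j - W i j) * r j)|
          ≤ γbar * (∑ j, |r' j - r j|) + ε * Rr := by
        calc |∑ j, (W' i j * (r' j - r j) + (W' i j - W i j) * r j)|
            ≤ ∑ j, |W' i j * (r' j - r j) + (W' i j - W i j) * r j| :=
              Finset.abs_sum_le_sum_abs _ _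
          _ ≤ ∑ j, (γbar * |r' j - r j| + ε * |r j|) := by
              apply Finset.sum_le_sum
              intro j _
              calc |W' i j * (r' j - r j) + (W' i j - W i j) * r j|
                  ≤ |W' i j * (r' j - r j)| + |(W' i j - W i j) * r j| := abs_add_le _ _
                _ = |W' i j| * |r' j - r j| + |W' i j - W i j| * |r j| := by
                    rw [abs_mul, abs_mul]
                _ ≤ γbar * |r' j - r j| + ε * |r j| :=
                    add_le_add (mul_le_mul_of_nonneg_right (hW'bd i j) (abs_nonneg _))
                      (mul_le_mul_of_nonneg_right (hW i j).le (abs_nonneg _))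
          _ = γbar * (∑ j, |r' j - r j|) + ε * (∑ j, |r j|) := by
              rw [Finset.sum_add_distrib, ← Finset.mul_sum, ← Finset.mul_sum]
          _ ≤ γbar * (∑ j, |r' j - r j|) + ε * Rr := by
              have := mul_le_mul_of_nonneg_left hrb hε.le
              linarith
      have hBsum : |∑ q, (B' i q - B i q) * xt q| ≤ ε * Rx := by
        calc |∑ q, (B' i q - B i q) * xt q|
            ≤ ∑ q, |(B' i q - B i q) * xt q| := Finset.abs_sum_le_sum_abs _ _
          _ ≤ ∑ q, ε * |xt q| := by
              apply Finset.sum_le_sum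
              intro q _
              rw [abs_mul]
              exact mul_le_mul_of_nonneg_right (hB i q).le (abs_nonneg _)
          _ = ε * ∑ q, |xt q| := by rw [← Finset.mul_sum]
          _ ≤ ε * Rx := mul_le_mul_of_nonneg_left hxb hε.le
      calc |a - c| = |(∑ j, (W' i j * (r' j - r j) + (W' i j - W i j) * r j))
            + (∑ q, (B' i q - B i q) * xt q) + (b' i - b i)| := by rw [heq]
        _ ≤ |(∑ j, (W' i j * (r' j - r j) + (W' i j - W i j) * r j))
            + (∑ q, (B' i q - B i q) * xt q)| + |b' i - b i| := abs_add_le _ _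
        _ ≤ |∑ j, (W' i j * (r' j - r j) + (W' i j - W i j) * r j)|
            + |∑ q, (B' i q - B i q) * xt q| + |b' i - b i| := by
              linarith [abs_add_le (∑ j, (W' i j * (r' j - r j) + (W' i j - W i j) * r j))
                (∑ q, (B' i q - B i q) * xt q)]
        _ ≤ γbar * (∑ j, |r' j - r j|) + ε * Rr + ε * Rx + ε := by
              linarith [hA, hBsum, (hb i).le]
    have h0 : (-α * r' i + β * φ a) - (-α * r i + β * φ c)
        = (-α) * (r' i - r i) + β * (φ a - φ c) := by ring
    calc |(-α * r' i + β * φ a) - (-α * r i + β * φ c)|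
        = |(-α) * (r' i - r i) + β * (φ a - φ c)| := by rw [h0]
      _ ≤ |(-α) * (r' i - r i)| + |β * (φ a - φ c)| := abs_add_le _ _
      _ = α * |r' i - r i| + β * |φ a - φ c| := by
          rw [abs_mul, abs_mul, abs_neg, abs_of_nonneg hα, abs_of_nonneg hβ.le]
      _ ≤ α * |r' i - r i| + β * (Kφ * |a - c|) := by
          have := hφ a c
          nlinarith [hβ.le]
      _ ≤ α * |r' i - r i|
          + β * (Kφ * (γbar * (∑ j, |r' j - r j|) + ε * Rr + ε * Rx + ε)) := by
          have := mul_le_mul_of_nonneg_left hac hKφ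
          nlinarith [hβ.le]
  calc ∑ i, |(-α * r' i + β * φ (W'.mulVec r' i + B'.mulVec xt i + b' i))
          - (-α * r i + β * φ (W.mulVec r i + B.mulVec xt i + b i))|
      ≤ ∑ i : Fin n, (α * |r' i - r i|
          + β * (Kφ * (γbar * (∑ j, |r' j - r j|) + ε * Rr + ε * Rx + ε))) :=
        Finset.sum_le_sum key
    _ = α * (∑ i, |r' i - r i|)
        + (n : ℝ) * (β * (Kφ * (γbar * (∑ j, |r' j - r j|) + ε * Rr + ε * Rx + ε))) := by
        rw [Finset.sum_add_distrib, ← Finset.mul_sum, Finset.sum_const, Finset.card_univ,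
          Fintype.card_fin, nsmul_eq_mul]
    _ = (α + β * Kφ * (n : ℝ) * γbar) * (∑ i, |r' i - r i|)
        + (n : ℝ) * β * Kφ * (Rx + Rr + 1) * ε := by ring

/-- Hidden-state perturbation bound for recurrent networks: if the perturbed recurrent
weights are bounded by `γ̄`, all perturbed parameters are within `ε ≤ 1` of the reference
parameters, the inputs have ℓ¹ norm at most `R_x`, and the reference hidden states have
ℓ¹ norm at most `R_r` up to time `T - 1`, then for every `0 ≤ t ≤ T` the ℓ¹ distance
between the perturbed and reference hidden states is at most
`n·β·K_φ·R̃·(Σ_{j=0}^{t-1} (α + β·K_φ·n·γ̄)^j)·ε` where `R̃ = R_x + R_r + 1`. -/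
theorem rnn_hidden_state_perturbation_bound
    (n d : ℕ) (hn : 1 ≤ n) (hd : 1 ≤ d)
    (α β : ℝ) (hα : 0 ≤ α) (hβ : 0 < β)
    (φ : ℝ → ℝ) (Kφ : ℝ) (hφ : ∀ s t : ℝ, |φ s - φ t| ≤ Kφ * |s - t|)
    (ε γbar Rr Rx : ℝ) (hε : 0 < ε) (hε1 : ε ≤ 1)
    (hγbar : 0 < γbar) (hRr : 0 < Rr) (hRx : 0 < Rx)
    (W W' : Matrix (Fin n) (Fin n) ℝ) (B B' : Matrix (Fin n) (Fin d) ℝ) (b b' : Fin n → ℝ)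
    (hW'bd : ∀ i j, |W' i j| ≤ γbar)
    (hW : ∀ i j, |W' i j - W i j| < ε)
    (hB : ∀ i q, |B' i q - B i q| < ε)
    (hb : ∀ i, |b' i - b i| < ε)
    (T : ℕ) (hT : 1 ≤ T)
    (x : ℕ → Fin d → ℝ) (hx : ∀ t < T, ∑ q, |x t q| ≤ Rx)
    (r0 : Fin n → ℝ)
    (hr : ∀ t < T, ∑ i, |rnnTrajP φ α β W B b x r0 t i| ≤ Rr) :
    ∀ t ≤ T,
      ∑ i, |rnnTrajP φ α β W' B' b' x r0 t i - rnnTrajP φ α β W B b x r0 t i|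
        ≤ (n : ℝ) * β * Kφ * (Rx + Rr + 1)
            * (∑ j ∈ Finset.range t, (α + β * Kφ * n * γbar) ^ j) * ε := by
  have hKφ : 0 ≤ Kφ := by
    have h := hφ 1 0
    norm_num at h
    exact le_trans (abs_nonneg _) h
  have hρ : 0 ≤ α + β * Kφ * (n : ℝ) * γbar := by
    have h1 : (0:ℝ) ≤ β * Kφ * (n : ℝ) * γbar := by positivity
    linarith
  intro t
  induction t with
  | zero => intro _; simp [rnnTrajP]
  | succ t ih =>
    intro ht
    have htT : t < T := Nat.lt_of_succ_le ht
    have ihD := ih htT.le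
    have step := rnn_step_bound' α β hα hβ φ Kφ hKφ hφ ε γbar Rr Rx hε
      W W' B B' b b' hW'bd hW hB hb
      (rnnTrajP φ α β W B b x r0 t) (rnnTrajP φ α β W' B' b' x r0 t) (x t)
      (hr t htT) (hx t htT)
    have hgs : ∑ j ∈ Finset.range (t + 1), (α + β * Kφ * (n : ℝ) * γbar) ^ j
        = (α + β * Kφ * (n : ℝ) * γbar) * ∑ j ∈ Finset.range t,
            (α + β * Kφ * (n : ℝ) * γbar) ^ j + 1 := geom_sum_succ
    have hmul := mul_le_mul_of_nonneg_left ihD hρ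
    simp only [rnnTrajP]
    rw [hgs]
    nlinarith [step, hmul]
end

section
/- Output perturbation bound for recurrent networks (Lemma B.5 of the paper, output part): Under the hypotheses of the hidden-state perturbation bound — namely α ≥ 0, β > 0, φ : ℝ → ℝ Lipschitz with constant K_φ, ε ∈ (0,1], γ̄, R_r, R_x > 0, R̃ = R_x + R_r + 1, entrywise bounds |W'_{i,j}| ≤ γ̄, entrywise differences |W' − W| < ε, |B' − B| < ε, |b' − b| < ε, inputs ‖x_t‖ ≤ R_x, reference trajectory r_t = −α r_{t−1} + β·φ(W r_{t−1} + B x_{t−1} + b) with ‖r_t‖ ≤ R_r for 0 ≤ t ≤ T−1 and perturbed trajectory r'_t = −α r'_{t−1} + β·φ(W' r'_{t−1} + B' x_{t−1} + b') with r'_0 = r_0 — suppose additionally that C, C' ∈ ℝ^{l×n} satisfy |C'_{p,i}| ≤ γ̄ and |C'_{p,i} − C_{p,i}| < ε for all indices, and ‖r_t‖ ≤ R_r for 0 ≤ t ≤ T. Then Σ_{t=1}^{T} ‖C' r'_t − C r_t‖ ≤ l·T·(γ̄·n·β·K_φ·R̃·Σ_{j=0}^{T−1}(α + β·K_φ·n·γ̄)^j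 + R_r)·ε. -/
open Finset Matrix

theorem le_mul_geom_sum_of_le_mul_add {R : Type*} [CommRing R] [PartialOrder R]
    [IsOrderedRing R] {e : ℕ → R} {ρ c : R} {T : ℕ} (hρ : 0 ≤ ρ)
    (h0 : e 0 ≤ 0) (hstep : ∀ t < T, e (t + 1) ≤ ρ * e t + c) :
    ∀ t ≤ T, e t ≤ c * ∑ j ∈ range t, ρ ^ j := by
  intro t
  induction t with
  | zero => simpa using h0
  | succ t ih =>
    intro ht
    calc e (t + 1) ≤ ρ * e t + c := hstep t ht
      _ ≤ ρ * (c * ∑ j ∈ range t, ρ ^ j) + c := by gcongr; exact ih (by omega)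
      _ = c * ∑ j ∈ range (t + 1), ρ ^ j := by rw [geom_sum_succ]; ring

section LinearOrderedCommRing

variable {R m k : Type*} [CommRing R] [LinearOrder R] [IsStrictOrderedRing R]
  [Fintype m] [Fintype k]

theorem nonneg_of_abs_sub_le_mul_abs_sub {f : R → R} {K : R}
    (hf : ∀ s t : R, |f s - f t| ≤ K * |s - t|) : 0 ≤ K := by
  simpa using (abs_nonneg _).trans (hf 1 0)

theorem sum_abs_mulVec_le (M : Matrix m k R) (v : k → R) {γ : R} (hM : ∀ i j, |M i j| ≤ γ) :
    ∑ i, |(M *ᵥ v) i| ≤ Fintype.card m * γ * ∑ j, |v j| := by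
  have hrow : ∀ i, |(M *ᵥ v) i| ≤ γ * ∑ j, |v j| := fun i =>
    calc |(M *ᵥ v) i| ≤ ∑ j, |M i j| * |v j| := by
          simpa only [mulVec, dotProduct, abs_mul] using
            abs_sum_le_sum_abs (fun j => M i j * v j) univ
      _ ≤ ∑ j, γ * |v j| := by gcongr with j; exact hM i j
      _ = γ * ∑ j, |v j| := (mul_sum _ _ _).symm
  calc ∑ i, |(M *ᵥ v) i| ≤ ∑ _i : m, γ * ∑ j, |v j| := sum_le_sum fun i _ => hrow i
    _ = Fintype.card m * γ * ∑ j, |v j| := by simp [mul_assoc]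

theorem sum_abs_mulVec_sub_mulVec_le (M M' : Matrix m k R) (v v' : k → R) {γ ε : R}
    (hM' : ∀ i j, |M' i j| ≤ γ) (hM : ∀ i j, |M' i j - M i j| ≤ ε) :
    ∑ i, |(M' *ᵥ v') i - (M *ᵥ v) i|
      ≤ Fintype.card m * (γ * ∑ j, |v' j - v j| + ε * ∑ j, |v j|) := by
  have hsplit : ∀ i, (M' *ᵥ v') i - (M *ᵥ v) i = (M' *ᵥ (v' - v)) i + ((M' - M) *ᵥ v) i := by
    intro i
    simp only [mulVec_sub, sub_mulVec, Pi.sub_apply]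
    ring
  calc ∑ i, |(M' *ᵥ v') i - (M *ᵥ v) i|
      ≤ ∑ i, (|(M' *ᵥ (v' - v)) i| + |((M' - M) *ᵥ v) i|) :=
        sum_le_sum fun i _ => hsplit i ▸ abs_add_le _ _
    _ = ∑ i, |(M' *ᵥ (v' - v)) i| + ∑ i, |((M' - M) *ᵥ v) i| := sum_add_distrib
    _ ≤ Fintype.card m * γ * ∑ j, |(v' - v) j| + Fintype.card m * ε * ∑ j, |v j| :=
        add_le_add (sum_abs_mulVec_le _ _ hM') (sum_abs_mulVec_le _ _ hM)
    _ = Fintype.card m * (γ * ∑ j, |v' j - v j| + ε * ∑ j, |v j|) := by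
        simp only [Pi.sub_apply]; ring

theorem abs_leaky_update_sub_le {φ : R → R} {α β K : R} (hα : 0 ≤ α) (hβ : 0 ≤ β)
    (hφ : ∀ s t : R, |φ s - φ t| ≤ K * |s - t|) (a a' u u' : R) :
    |(-α * a' + β * φ u') - (-α * a + β * φ u)| ≤ α * |a' - a| + β * K * |u' - u| :=
  calc |(-α * a' + β * φ u') - (-α * a + β * φ u)| = |-α * (a' - a) + β * (φ u' - φ u)| := by
        ring_nf
    _ ≤ |-α * (a' - a)| + |β * (φ u' - φ u)| := abs_add_le _ _
    _ = α * |a' - a| + β * |φ u' - φ u| := by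
        rw [abs_mul, abs_mul, abs_neg, abs_of_nonneg hα, abs_of_nonneg hβ]
    _ ≤ α * |a' - a| + β * K * |u' - u| := by
        rw [mul_assoc β]; gcongr; exact hφ u' u

end LinearOrderedCommRing

section Trajectory

variable {n d : ℕ} {φ : ℝ → ℝ} {α β Kφ γ ε : ℝ} {W W' : Matrix (Fin n) (Fin n) ℝ}
  {B B' : Matrix (Fin n) (Fin d) ℝ} {b b' : Fin n → ℝ} (x : ℕ → Fin d → ℝ) (r0 : Fin n → ℝ)

theorem sum_abs_rnnTrajP_sub_succ_le (hα : 0 ≤ α) (hβ : 0 ≤ β)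
    (hφ : ∀ s t : ℝ, |φ s - φ t| ≤ Kφ * |s - t|) (hW'bd : ∀ i j, |W' i j| ≤ γ)
    (hW : ∀ i j, |W' i j - W i j| ≤ ε) (hB : ∀ i q, |B' i q - B i q| ≤ ε)
    (hb : ∀ i, |b' i - b i| ≤ ε) (t : ℕ) :
    ∑ i, |rnnTrajP φ α β W' B' b' x r0 (t + 1) i - rnnTrajP φ α β W B b x r0 (t + 1) i|
      ≤ (α + β * Kφ * n * γ)
          * ∑ i, |rnnTrajP φ α β W' B' b' x r0 t i - rnnTrajP φ α β W B b x r0 t i|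
        + n * β * Kφ * (∑ q, |x t q| + ∑ i, |rnnTrajP φ α β W B b x r0 t i| + 1) * ε := by
  set r := rnnTrajP φ α β W B b x r0 t
  set r' := rnnTrajP φ α β W' B' b' x r0 t
  set u : Fin n → ℝ := fun i => (W *ᵥ r) i + (B *ᵥ x t) i + b i
  set u' : Fin n → ℝ := fun i => (W' *ᵥ r') i + (B' *ᵥ x t) i + b' i
  have hKφ : 0 ≤ Kφ := nonneg_of_abs_sub_le_mul_abs_sub hφ
  have hpre : ∑ i, |u' i - u i|
      ≤ n * (γ * ∑ i, |r' i - r i| + ε * ∑ i, |r i|) + n * ε * ∑ q, |x t q| + n * ε := by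
    have hsplit : ∀ i, u' i - u i
        = ((W' *ᵥ r') i - (W *ᵥ r) i) + ((B' - B) *ᵥ x t) i + (b' i - b i) := by
      intro i
      simp only [u, u', sub_mulVec, Pi.sub_apply]
      ring
    calc ∑ i, |u' i - u i|
        ≤ ∑ i, (|(W' *ᵥ r') i - (W *ᵥ r) i| + |((B' - B) *ᵥ x t) i| + |b' i - b i|) :=
          sum_le_sum fun i _ => hsplit i ▸ abs_add_three _ _ _
      _ = ∑ i, |(W' *ᵥ r') i - (W *ᵥ r) i| + ∑ i, |((B' - B) *ᵥ x t) i| + ∑ i, |b' i - b i| := by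
          rw [sum_add_distrib, sum_add_distrib]
      _ ≤ n * (γ * ∑ i, |r' i - r i| + ε * ∑ i, |r i|) + n * ε * ∑ q, |x t q| + n * ε := by
          gcongr
          · simpa using sum_abs_mulVec_sub_mulVec_le W W' r r' hW'bd hW
          · simpa using sum_abs_mulVec_le (B' - B) (x t) hB
          · simpa using sum_le_sum fun i (_ : i ∈ univ) => hb i
  calc ∑ i, |rnnTrajP φ α β W' B' b' x r0 (t + 1) i - rnnTrajP φ α β W B b x r0 (t + 1) i|
      ≤ ∑ i, (α * |r' i - r i| + β * Kφ * |u' i - u i|) :=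
        sum_le_sum fun i _ => abs_leaky_update_sub_le hα hβ hφ _ _ _ _
    _ = α * ∑ i, |r' i - r i| + β * Kφ * ∑ i, |u' i - u i| := by
        rw [sum_add_distrib, mul_sum, mul_sum]
    _ ≤ α * ∑ i, |r' i - r i|
          + β * Kφ * (n * (γ * ∑ i, |r' i - r i| + ε * ∑ i, |r i|)
            + n * ε * ∑ q, |x t q| + n * ε) := by gcongr
    _ = _ := by ring

theorem sum_abs_rnnTrajP_sub_le (hα : 0 ≤ α) (hβ : 0 ≤ β)
    (hφ : ∀ s t : ℝ, |φ s - φ t| ≤ Kφ * |s - t|) (hγ : 0 ≤ γ) (hε : 0 ≤ ε)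
    (hW'bd : ∀ i j, |W' i j| ≤ γ) (hW : ∀ i j, |W' i j - W i j| ≤ ε)
    (hB : ∀ i q, |B' i q - B i q| ≤ ε) (hb : ∀ i, |b' i - b i| ≤ ε) {T : ℕ} {Rx Rr : ℝ}
    (hx : ∀ t < T, ∑ q, |x t q| ≤ Rx)
    (hr : ∀ t < T, ∑ i, |rnnTrajP φ α β W B b x r0 t i| ≤ Rr) :
    ∀ t ≤ T, ∑ i, |rnnTrajP φ α β W' B' b' x r0 t i - rnnTrajP φ α β W B b x r0 t i|
      ≤ n * β * Kφ * (Rx + Rr + 1) * ε * ∑ j ∈ range t, (α + β * Kφ * n * γ) ^ j := by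
  have hKφ : 0 ≤ Kφ := nonneg_of_abs_sub_le_mul_abs_sub hφ
  refine le_mul_geom_sum_of_le_mul_add (by positivity) (by simp [rnnTrajP]) fun t ht => ?_
  refine (sum_abs_rnnTrajP_sub_succ_le x r0 hα hβ hφ hW'bd hW hB hb t).trans ?_
  gcongr
  exacts [hx t ht, hr t ht]

end Trajectory

theorem rnn_output_perturbation_bound_general
    (n d l : ℕ)
    (α β : ℝ) (hα : 0 ≤ α) (hβ : 0 < β)
    (φ : ℝ → ℝ) (Kφ : ℝ) (hφ : ∀ s t : ℝ, |φ s - φ t| ≤ Kφ * |s - t|)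
    (ε γbar Rr Rx : ℝ) (hε : 0 < ε)
    (hγbar : 0 < γbar) (hRr : 0 < Rr) (hRx : 0 < Rx)
    (W W' : Matrix (Fin n) (Fin n) ℝ) (B B' : Matrix (Fin n) (Fin d) ℝ) (b b' : Fin n → ℝ)
    (C C' : Matrix (Fin l) (Fin n) ℝ)
    (hW'bd : ∀ i j, |W' i j| ≤ γbar)
    (hW : ∀ i j, |W' i j - W i j| < ε)
    (hB : ∀ i q, |B' i q - B i q| < ε)
    (hb : ∀ i, |b' i - b i| < ε)
    (hC'bd : ∀ p i, |C' p i| ≤ γbar)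
    (hC : ∀ p i, |C' p i - C p i| < ε)
    (T : ℕ)
    (x : ℕ → Fin d → ℝ) (hx : ∀ t < T, ∑ q, |x t q| ≤ Rx)
    (r0 : Fin n → ℝ)
    (hr : ∀ t ≤ T, ∑ i, |rnnTrajP φ α β W B b x r0 t i| ≤ Rr) :
    ∑ t ∈ Finset.Icc 1 T,
        (∑ p, |C'.mulVec (rnnTrajP φ α β W' B' b' x r0 t) p
                - C.mulVec (rnnTrajP φ α β W B b x r0 t) p|)
      ≤ (l : ℝ) * T *
          (γbar * n * β * Kφ * (Rx + Rr + 1)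
              * (∑ j ∈ Finset.range T, (α + β * Kφ * n * γbar) ^ j) + Rr) * ε := by
  have hKφ : 0 ≤ Kφ := nonneg_of_abs_sub_le_mul_abs_sub hφ
  set ρ := α + β * Kφ * n * γbar
  have hidden := sum_abs_rnnTrajP_sub_le x r0 hα hβ.le hφ hγbar.le hε.le hW'bd
    (fun i j => (hW i j).le) (fun i q => (hB i q).le) (fun i => (hb i).le) hx
    (fun t ht => hr t ht.le)
  calc ∑ t ∈ Icc 1 T, ∑ p, |(C' *ᵥ rnnTrajP φ α β W' B' b' x r0 t) p
          - (C *ᵥ rnnTrajP φ α β W B b x r0 t) p|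
      ≤ ∑ _t ∈ Icc 1 T, (l : ℝ) * (γbar * n * β * Kφ * (Rx + Rr + 1)
          * ∑ j ∈ range T, ρ ^ j + Rr) * ε := by
        refine sum_le_sum fun t ht => ?_
        have htT : t ≤ T := (mem_Icc.mp ht).2
        have hρ_sum : ∑ j ∈ range t, ρ ^ j ≤ ∑ j ∈ range T, ρ ^ j :=
          sum_le_sum_of_subset_of_nonneg (range_subset_range.mpr htT)
            fun j _ _ => pow_nonneg (by positivity) j
        calc _ ≤ (l : ℝ) * (γbar * ∑ i, |rnnTrajP φ α β W' B' b' x r0 t i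
                - rnnTrajP φ α β W B b x r0 t i| + ε * ∑ i, |rnnTrajP φ α β W B b x r0 t i|) := by
              simpa using sum_abs_mulVec_sub_mulVec_le C C' _ _ hC'bd fun p i => (hC p i).le
          _ ≤ (l : ℝ) * (γbar * (n * β * Kφ * (Rx + Rr + 1) * ε * ∑ j ∈ range T, ρ ^ j)
                + ε * Rr) := by
              gcongr
              exacts [(hidden t htT).trans (by gcongr), hr t htT]
          _ = _ := by ring
    _ = _ := by simp only [sum_const, Nat.card_Icc, add_tsub_cancel_right, nsmul_eq_mul]; ring

/-- Output perturbation bound for recurrent networks: under the hypotheses of the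
hidden-state perturbation bound, if additionally the perturbed output weights are bounded
by `γ̄` and within `ε` of the reference output weights, and the reference hidden states
have ℓ¹ norm at most `R_r` up to time `T`, then the total ℓ¹ output error over times
`1, …, T` is at most
`l·T·(γ̄·n·β·K_φ·R̃·Σ_{j=0}^{T-1}(α + β·K_φ·n·γ̄)^j + R_r)·ε` with `R̃ = R_x + R_r + 1`. -/
theorem rnn_output_perturbation_bound
    (n d l : ℕ) (hn : 1 ≤ n) (hd : 1 ≤ d) (hl : 1 ≤ l)
    (α β : ℝ) (hα : 0 ≤ α) (hβ : 0 < β)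
    (φ : ℝ → ℝ) (Kφ : ℝ) (hφ : ∀ s t : ℝ, |φ s - φ t| ≤ Kφ * |s - t|)
    (ε γbar Rr Rx : ℝ) (hε : 0 < ε) (hε1 : ε ≤ 1)
    (hγbar : 0 < γbar) (hRr : 0 < Rr) (hRx : 0 < Rx)
    (W W' : Matrix (Fin n) (Fin n) ℝ) (B B' : Matrix (Fin n) (Fin d) ℝ) (b b' : Fin n → ℝ)
    (C C' : Matrix (Fin l) (Fin n) ℝ)
    (hW'bd : ∀ i j, |W' i j| ≤ γbar)
    (hW : ∀ i j, |W' i j - W i j| < ε)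
    (hB : ∀ i q, |B' i q - B i q| < ε)
    (hb : ∀ i, |b' i - b i| < ε)
    (hC'bd : ∀ p i, |C' p i| ≤ γbar)
    (hC : ∀ p i, |C' p i - C p i| < ε)
    (T : ℕ) (hT : 1 ≤ T)
    (x : ℕ → Fin d → ℝ) (hx : ∀ t < T, ∑ q, |x t q| ≤ Rx)
    (r0 : Fin n → ℝ)
    (hr : ∀ t ≤ T, ∑ i, |rnnTrajP φ α β W B b x r0 t i| ≤ Rr) :
    ∑ t ∈ Finset.Icc 1 T,
        (∑ p, |C'.mulVec (rnnTrajP φ α β W' B' b' x r0 t) p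
                - C.mulVec (rnnTrajP φ α β W B b x r0 t) p|)
      ≤ (l : ℝ) * T *
          (γbar * n * β * Kφ * (Rx + Rr + 1)
              * (∑ j ∈ Finset.range T, (α + β * Kφ * n * γbar) ^ j) + Rr) * ε :=
  rnn_output_perturbation_bound_general n d l α β hα hβ φ Kφ hφ ε γbar Rr Rx hε hγbar hRr hRx W W' B
    B' b b' C C' hW'bd hW hB hb hC'bd hC T x hx r0 hr
end
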